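/- arXiv:1104.0230 — 13 statements merged into one kernel-verified Lean document; each statement's English description precedes it below -/
import Mathlib

section
/- For all rates R1 > 0 and R2 > 0, the minimum power P ≥ 0 for which there exists a power-allocation parameter η ∈ [0,1] satisfying R1 ≤ (κ/2)·log₂(1 + η·P/((1−η)·P + N1)) and R2 ≤ (κ/2)·log₂(1 + (1−η)·P/N2) is exactly P(R1,R2) = N1·(2^{2R1/κ} − 1) + N2·(2^{2R2/κ} − 1)·2^{2R1/κ}; i.e., this value of P is feasible (for some η ∈ [0,1]) and no smaller P ≥ 0 is feasible. -/
/-!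
Writing `a = 2^{2R₁/κ}`, `b = 2^{2R₂/κ}` and `Q = (1-η)P` for the power of the private
layer, the two rate constraints say exactly `a (Q + N₁) ≤ P + N₁` and `(b - 1) N₂ ≤ Q`.
Hence `P ≥ a ((b - 1) N₂ + N₁) - N₁`, with equality when `Q = (b - 1) N₂`.
-/

open Real Set

lemma le_mul_logb_iff_rpow_le {b c x R : ℝ} (hb : 1 < b) (hc : 0 < c) (hx : 0 < x) :
    R ≤ c * logb b x ↔ b ^ (R / c) ≤ x := by
  rw [← le_logb_iff_rpow_le hb hx, div_le_iff₀' hc]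

lemma le_half_mul_logb_two_iff {κ x R : ℝ} (hκ : 0 < κ) (hx : 0 < x) :
    R ≤ κ / 2 * logb 2 x ↔ (2 : ℝ) ^ (2 * R / κ) ≤ x := by
  rw [le_mul_logb_iff_rpow_le one_lt_two (half_pos hκ) hx, div_div_eq_mul_div, mul_comm]

lemma le_one_add_div_iff {a s d : ℝ} (hd : 0 < d) : a ≤ 1 + s / d ↔ a * d ≤ d + s := by
  rw [one_add_div hd.ne', le_div_iff₀ hd]

lemma broadcast_rate_constraints_iff {κ N1 N2 R1 R2 P η : ℝ} (hκ : 0 < κ) (hN1 : 0 < N1)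
    (hN2 : 0 < N2) (hP : 0 ≤ P) (hη : η ∈ Icc (0 : ℝ) 1) :
    (R1 ≤ κ / 2 * logb 2 (1 + η * P / ((1 - η) * P + N1)) ∧
        R2 ≤ κ / 2 * logb 2 (1 + (1 - η) * P / N2)) ↔
      ((2 : ℝ) ^ (2 * R1 / κ) * ((1 - η) * P + N1) ≤ P + N1 ∧
        (2 : ℝ) ^ (2 * R2 / κ) * N2 ≤ N2 + (1 - η) * P) := by
  obtain ⟨hη0, hη1⟩ := hη
  have hQ : 0 ≤ (1 - η) * P := mul_nonneg (sub_nonneg.mpr hη1) hP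
  have hD : 0 < (1 - η) * P + N1 := by positivity
  have hP1 : 0 < 1 + η * P / ((1 - η) * P + N1) := by positivity
  have hP2 : 0 < 1 + (1 - η) * P / N2 := by positivity
  rw [le_half_mul_logb_two_iff hκ hP1, le_half_mul_logb_two_iff hκ hP2,
    le_one_add_div_iff hD, le_one_add_div_iff hN2]
  constructor <;> rintro ⟨h1, h2⟩ <;> constructor <;> linarith

lemma isLeast_superposition_power {a b N1 N2 : ℝ} (ha : 1 ≤ a) (hb : 1 < b) (hN1 : 0 ≤ N1)
    (hN2 : 0 < N2) :
    IsLeast {P : ℝ | 0 ≤ P ∧ ∃ η ∈ Icc (0 : ℝ) 1,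
        a * ((1 - η) * P + N1) ≤ P + N1 ∧ b * N2 ≤ N2 + (1 - η) * P}
      (N1 * (a - 1) + N2 * (b - 1) * a) := by
  set Q := N2 * (b - 1)
  have hQ : 0 < Q := mul_pos hN2 (sub_pos.mpr hb)
  have hQP : Q ≤ N1 * (a - 1) + Q * a := by nlinarith
  constructor
  · have hP : 0 < N1 * (a - 1) + Q * a := hQ.trans_le hQP
    refine ⟨hP.le, 1 - Q / (N1 * (a - 1) + Q * a), ⟨?_, ?_⟩, ?_⟩
    · rw [sub_nonneg]
      exact div_le_one_of_le₀ hQP hP.le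
    · linarith [div_nonneg hQ.le hP.le]
    · rw [sub_sub_cancel, div_mul_cancel₀ _ hP.ne']
      constructor <;> linarith
  · rintro P ⟨-, η, -, h1, h2⟩
    have : a * Q ≤ a * ((1 - η) * P) := mul_le_mul_of_nonneg_left (by linarith) (by linarith)
    linarith

/-- For rates `R1 > 0`, `R2 > 0`, bandwidth ratio `κ > 0` and noise powers
`N1 ≥ N2 > 0`, the minimum power `P ≥ 0` for which some power split `η ∈ [0,1]` satisfies
`R1 ≤ (κ/2)·log₂(1 + ηP/((1−η)P + N1))` and `R2 ≤ (κ/2)·log₂(1 + (1−η)P/N2)` is exactly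
`N1·(2^{2R1/κ} − 1) + N2·(2^{2R2/κ} − 1)·2^{2R1/κ}`. -/
theorem minimum_broadcast_power (κ N1 N2 R1 R2 : ℝ)
    (hκ : 0 < κ) (hN2 : 0 < N2) (hN : N2 ≤ N1) (hR1 : 0 < R1) (hR2 : 0 < R2) :
    IsLeast {P : ℝ | 0 ≤ P ∧ ∃ η ∈ Set.Icc (0 : ℝ) 1,
        R1 ≤ κ / 2 * Real.logb 2 (1 + η * P / ((1 - η) * P + N1)) ∧
        R2 ≤ κ / 2 * Real.logb 2 (1 + (1 - η) * P / N2)}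
      (N1 * ((2 : ℝ) ^ (2 * R1 / κ) - 1)
        + N2 * ((2 : ℝ) ^ (2 * R2 / κ) - 1) * (2 : ℝ) ^ (2 * R1 / κ)) := by
  have hN1 : 0 < N1 := hN2.trans_le hN
  have ha : 1 < (2 : ℝ) ^ (2 * R1 / κ) := one_lt_rpow one_lt_two (by positivity)
  have hb : 1 < (2 : ℝ) ^ (2 * R2 / κ) := one_lt_rpow one_lt_two (by positivity)
  convert isLeast_superposition_power ha.le hb hN1.le hN2 using 1
  exact Set.ext fun P => and_congr_right fun hP => exists_congr fun η =>
    and_congr_right fun hη => broadcast_rate_constraints_iff hκ hN1 hN2 hP hη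
end

section
/- Let ρ ∈ [0,1), κ > 0, N1 ≥ N2 > 0, and D1, D2 ∈ (0,1). The minimum P ≥ 0 for which there exists η ∈ [0,1] satisfying D1 ≥ (1 + η·P/((1−η)·P + N1))^{−κ} and D2 ≥ (1−ρ²)·(1 + (1−η)·P/N2)^{−κ} equals P_outer := N1·(D1^{−1/κ} − 1) + N2·D1^{−1/κ}·max{0, ((1−ρ²)/D2)^{1/κ} − 1}. -/
/-!
With `A = D1^(-1/κ)` and `C = ((1-ρ²)/D2)^(1/κ)`, the two distortion constraints are equivalent to
the linear constraints `(A - 1)((1-η)P + N1) ≤ ηP` and `N2 (C - 1) ≤ (1-η)P` on the power split.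
Adding the first to `(1-η)P` gives `P ≥ N1 (A - 1) + A (1-η)P ≥ N1 (A - 1) + N2 A max{0, C - 1}`,
with equality when `(1-η)P = N2 max{0, C - 1}` and the rest of the power goes to the first user.
-/

lemma rpow_neg_le_iff {κ D y : ℝ} (hκ : 0 < κ) (hD : 0 < D) (hy : 0 < y) :
    y ^ (-κ) ≤ D ↔ D ^ (-1 / κ) ≤ y := by
  rw [← Real.rpow_inv_le_iff_of_neg hD hy (neg_neg_of_pos hκ), neg_div, one_div, inv_neg]

lemma mul_rpow_neg_le_iff {κ c D y : ℝ} (hκ : 0 < κ) (hc : 0 < c) (hD : 0 < D) (hy : 0 < y) :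
    c * y ^ (-κ) ≤ D ↔ (c / D) ^ (1 / κ) ≤ y := by
  rw [mul_comm, ← le_div_iff₀ hc, rpow_neg_le_iff hκ (div_pos hD hc) hy, neg_div,
    Real.rpow_neg (div_pos hD hc).le, ← Real.inv_rpow (div_pos hD hc).le, inv_div]

lemma le_one_add_div_iff_s2 {a b c : ℝ} (hc : 0 < c) : a ≤ 1 + b / c ↔ (a - 1) * c ≤ b := by
  rw [← le_div_iff₀ hc, sub_le_iff_le_add']

lemma le_add_of_split_power_constraints {N₁ N₂ A C u v : ℝ} (hN₁ : 0 < N₁) (hN₂ : 0 < N₂)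
    (hA : 0 ≤ A) (hv : 0 ≤ v) (h₁ : A ≤ 1 + u / (v + N₁)) (h₂ : C ≤ 1 + v / N₂) :
    N₁ * (A - 1) + N₂ * A * max 0 (C - 1) ≤ u + v := by
  rw [le_one_add_div_iff_s2 (by positivity)] at h₁
  rw [le_one_add_div_iff_s2 hN₂] at h₂
  have hv₂ : N₂ * max 0 (C - 1) ≤ v := by
    rw [mul_max_of_nonneg _ _ hN₂.le]; exact max_le (by simpa using hv) (by linarith)
  nlinarith [mul_le_mul_of_nonneg_left hv₂ hA]

theorem isLeast_split_power_constraints {N₁ N₂ A C : ℝ} (hN₁ : 0 < N₁) (hN₂ : 0 < N₂)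
    (hA : 1 < A) :
    IsLeast {P : ℝ | 0 ≤ P ∧ ∃ η ∈ Set.Icc (0 : ℝ) 1,
        A ≤ 1 + η * P / ((1 - η) * P + N₁) ∧ C ≤ 1 + (1 - η) * P / N₂}
      (N₁ * (A - 1) + N₂ * A * max 0 (C - 1)) := by
  set B := max 0 (C - 1)
  set P := N₁ * (A - 1) + N₂ * A * B
  have hB : 0 ≤ B := le_max_left _ _
  have hP : 0 < P := by positivity
  set u := (A - 1) * (N₁ + N₂ * B)
  have hu : 0 ≤ u := by positivity
  have huP : u / P * P = u := div_mul_cancel₀ _ hP.ne'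
  have hvP : (1 - u / P) * P = N₂ * B := by rw [sub_mul, one_mul, huP]; ring
  refine ⟨⟨hP.le, u / P, ⟨by positivity, div_le_one_of_le₀ (by nlinarith) hP.le⟩, ?_, ?_⟩, ?_⟩
  · rw [huP, hvP, le_one_add_div_iff_s2 (by positivity)]
    linarith
  · rw [hvP, mul_div_cancel_left₀ _ hN₂.ne']
    linarith [le_max_right 0 (C - 1)]
  · rintro P ⟨hP, η, ⟨-, hη⟩, h₁, h₂⟩
    calc _ ≤ η * P + (1 - η) * P :=
          le_add_of_split_power_constraints hN₁ hN₂ (by linarith) (by nlinarith) h₁ h₂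
      _ = P := by ring

/-- For `ρ ∈ [0,1)`, `κ > 0`, `N1 ≥ N2 > 0`, `D1, D2 ∈ (0,1)`, the minimum
`P ≥ 0` for which some `η ∈ [0,1]` satisfies `D1 ≥ (1 + ηP/((1−η)P + N1))^{−κ}` and
`D2 ≥ (1−ρ²)(1 + (1−η)P/N2)^{−κ}` equals
`N1·(D1^{−1/κ} − 1) + N2·D1^{−1/κ}·max{0, ((1−ρ²)/D2)^{1/κ} − 1}`. -/
theorem outer_bound_minimum_power (ρ κ N1 N2 D1 D2 : ℝ)
    (hρ : ρ ∈ Set.Ico (0 : ℝ) 1) (hκ : 0 < κ) (hN2 : 0 < N2) (hN : N2 ≤ N1)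
    (hD1 : D1 ∈ Set.Ioo (0 : ℝ) 1) (hD2 : D2 ∈ Set.Ioo (0 : ℝ) 1) :
    IsLeast {P : ℝ | 0 ≤ P ∧ ∃ η ∈ Set.Icc (0 : ℝ) 1,
        D1 ≥ (1 + η * P / ((1 - η) * P + N1)) ^ (-κ) ∧
        D2 ≥ (1 - ρ ^ 2) * (1 + (1 - η) * P / N2) ^ (-κ)}
      (N1 * (D1 ^ (-1 / κ) - 1)
        + N2 * D1 ^ (-1 / κ) * max 0 (((1 - ρ ^ 2) / D2) ^ (1 / κ) - 1)) := by
  have hN1 : 0 < N1 := hN2.trans_le hN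
  have hρ2 : 0 < 1 - ρ ^ 2 := by nlinarith [hρ.1, hρ.2]
  have hA : 1 < D1 ^ (-1 / κ) :=
    Real.one_lt_rpow_of_pos_of_lt_one_of_neg hD1.1 hD1.2 (by simpa [neg_div] using hκ)
  convert isLeast_split_power_constraints hN1 hN2 hA using 2
  ext P
  refine and_congr_right fun hP => exists_congr fun η => and_congr_right fun ⟨hη0, hη1⟩ => ?_
  have huP : 0 ≤ η * P := mul_nonneg hη0 hP
  have hvP : 0 ≤ (1 - η) * P := mul_nonneg (sub_nonneg.2 hη1) hP
  rw [ge_iff_le, ge_iff_le, rpow_neg_le_iff hκ hD1.1 (by positivity),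
    mul_rpow_neg_le_iff hκ hρ2 hD2.1 (by positivity)]
end

section
/- Fix ρ ∈ (0,1), κ > 0, N1 ≥ N2 > 0, and D2 ∈ (0, 1−ρ²]. For D1 ∈ (0,1) define Pρ(D1) := N1·(D1^{−1/κ} − 1) + N2·D1^{−1/κ}·(((1 − ρ²·(1−D1))/D2)^{1/κ} − 1) and P_ob(D1) := N1·(D1^{−1/κ} − 1) + N2·D1^{−1/κ}·(((1−ρ²)/D2)^{1/κ} − 1). Then the ratio Pρ(D1)/P_ob(D1) tends to 1 as D1 → 0 from the right. -/
/-!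
Multiplying numerator and denominator by `D1 ^ (1/κ)` removes the blow-up at `D1 = 0`: both
become `N1 (1 - D1 ^ (1/κ)) + N2 (c ^ (1/κ) - 1)` with `c → (1 - ρ²)/D2`, so they have the same
limit `N1 + N2 (((1 - ρ²)/D2) ^ (1/κ) - 1)`, which is positive because `D2 ≤ 1 - ρ²` and
`N2 ≤ N1`.
-/

open Filter Real Topology

lemma mul_rpow_neg_sub_one_add_mul (a b c s x : ℝ) (hx : 0 < x) :
    a * (x ^ (-s) - 1) + b * x ^ (-s) * (c - 1) = x ^ (-s) * (a * (1 - x ^ s) + b * (c - 1)) := by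
  have hinv : x ^ (-s) * x ^ s = 1 := by rw [← rpow_add hx, neg_add_cancel, rpow_zero]
  linear_combination a * hinv

lemma tendsto_mul_one_sub_rpow_add_mul {a b s c₀ : ℝ} {c : ℝ → ℝ} (hs : 0 < s)
    (hc : Tendsto c (𝓝[>] 0) (𝓝 c₀)) :
    Tendsto (fun x => a * (1 - x ^ s) + b * (c x ^ s - 1)) (𝓝[>] 0)
      (𝓝 (a + b * (c₀ ^ s - 1))) := by
  have hxs : Tendsto (fun x : ℝ => x ^ s) (𝓝[>] 0) (𝓝 0) :=
    tendsto_nhdsWithin_of_tendsto_nhds tendsto_id |>.rpow_const_nhds_zero hs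
  simpa using (((tendsto_const_nhds (x := 1)).sub hxs).const_mul a).add
    (((hc.rpow_const (.inr hs.le)).sub (tendsto_const_nhds (x := 1))).const_mul b)

theorem ratio_tendsto_one_as_D1_to_zero_general (ρ κ N1 N2 D2 : ℝ)
    (hκ : 0 < κ) (hN2 : 0 < N2) (hN : N2 ≤ N1)
    (hD2 : D2 ∈ Set.Ioc (0 : ℝ) (1 - ρ ^ 2)) :
    Filter.Tendsto (fun D1 : ℝ =>
        (N1 * (D1 ^ (-1 / κ) - 1)
            + N2 * D1 ^ (-1 / κ) * (((1 - ρ ^ 2 * (1 - D1)) / D2) ^ (1 / κ) - 1)) /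
        (N1 * (D1 ^ (-1 / κ) - 1)
            + N2 * D1 ^ (-1 / κ) * (((1 - ρ ^ 2) / D2) ^ (1 / κ) - 1)))
      (nhdsWithin 0 (Set.Ioi 0)) (nhds 1) := by
  obtain ⟨hD2, hD2ρ⟩ := hD2
  have hs : 0 < 1 / κ := by positivity
  have hB : 1 ≤ ((1 - ρ ^ 2) / D2) ^ (1 / κ) := one_le_rpow ((one_le_div hD2).2 hD2ρ) hs.le
  have hL : N1 + N2 * (((1 - ρ ^ 2) / D2) ^ (1 / κ) - 1) ≠ 0 := by nlinarith
  have hc : Tendsto (fun x : ℝ => (1 - ρ ^ 2 * (1 - x)) / D2) (𝓝[>] 0) (𝓝 ((1 - ρ ^ 2) / D2)) :=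
    tendsto_nhdsWithin_of_tendsto_nhds <| by
      simpa using (by fun_prop : Continuous fun x : ℝ => (1 - ρ ^ 2 * (1 - x)) / D2).tendsto 0
  have hnum := tendsto_mul_one_sub_rpow_add_mul (a := N1) (b := N2) hs hc
  have hden := tendsto_mul_one_sub_rpow_add_mul (a := N1) (b := N2) hs
    (tendsto_const_nhds (x := (1 - ρ ^ 2) / D2))
  have hratio := hnum.div hden hL
  rw [div_self hL] at hratio
  refine hratio.congr' ?_
  filter_upwards [self_mem_nhdsWithin] with x (hx : 0 < x)
  simp only [neg_div, mul_rpow_neg_sub_one_add_mul _ _ _ _ _ hx]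
  rw [mul_div_mul_left _ _ (rpow_pos_of_pos hx _).ne', Pi.div_apply]

/-- Fix `ρ ∈ (0,1)`, `κ > 0`, `N1 ≥ N2 > 0`, `D2 ∈ (0, 1−ρ²]`. With
`Pρ(D1) = N1(D1^{−1/κ} − 1) + N2·D1^{−1/κ}·(((1 − ρ²(1−D1))/D2)^{1/κ} − 1)` and
`P_ob(D1) = N1(D1^{−1/κ} − 1) + N2·D1^{−1/κ}·(((1−ρ²)/D2)^{1/κ} − 1)`, the ratio
`Pρ(D1)/P_ob(D1) → 1` as `D1 → 0⁺`. -/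
theorem ratio_tendsto_one_as_D1_to_zero (ρ κ N1 N2 D2 : ℝ)
    (hρ : ρ ∈ Set.Ioo (0 : ℝ) 1) (hκ : 0 < κ) (hN2 : 0 < N2) (hN : N2 ≤ N1)
    (hD2 : D2 ∈ Set.Ioc (0 : ℝ) (1 - ρ ^ 2)) :
    Filter.Tendsto (fun D1 : ℝ =>
        (N1 * (D1 ^ (-1 / κ) - 1)
            + N2 * D1 ^ (-1 / κ) * (((1 - ρ ^ 2 * (1 - D1)) / D2) ^ (1 / κ) - 1)) /
        (N1 * (D1 ^ (-1 / κ) - 1)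
            + N2 * D1 ^ (-1 / κ) * (((1 - ρ ^ 2) / D2) ^ (1 / κ) - 1)))
      (nhdsWithin 0 (Set.Ioi 0)) (nhds 1) :=
  ratio_tendsto_one_as_D1_to_zero_general ρ κ N1 N2 D2 hκ hN2 hN hD2
end

section
/- Fix ρ ∈ (0,1), κ > 0, N1 ≥ N2 > 0, and D1 ∈ (0, 1−ρ²); set δ := 1 − D1 (so δ > ρ²). For D2 ∈ (0,1) define A := ((1−ρ²)/(D1·(1 − ρ²/δ)))^{1/κ}, P'(D2) := N1·(A − 1) + N2·(((1 − ρ²/δ)/D2)^{1/κ} − 1)·A, and P_ob(D2) := N1·(D1^{−1/κ} − 1) + N2·D1^{−1/κ}·max{0, ((1−ρ²)/D2)^{1/κ} − 1}. Then P'(D2)/P_ob(D2) tends to 1 as D2 → 0 from the right. -/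
/-- Fix `ρ ∈ (0,1)`, `κ > 0`, `N1 ≥ N2 > 0`, `D1 ∈ (0, 1−ρ²)`, `δ := 1−D1`.
With `A = ((1−ρ²)/(D1(1 − ρ²/δ)))^{1/κ}`,
`P'(D2) = N1(A − 1) + N2(((1 − ρ²/δ)/D2)^{1/κ} − 1)·A`, and
`P_ob(D2) = N1(D1^{−1/κ} − 1) + N2·D1^{−1/κ}·max{0, ((1−ρ²)/D2)^{1/κ} − 1}`, the ratio
`P'(D2)/P_ob(D2) → 1` as `D2 → 0⁺`. -/
theorem ratio_tendsto_one_as_D2_to_zero (ρ κ N1 N2 D1 : ℝ)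
    (hρ : ρ ∈ Set.Ioo (0 : ℝ) 1) (hκ : 0 < κ) (hN2 : 0 < N2) (hN : N2 ≤ N1)
    (hD1 : D1 ∈ Set.Ioo (0 : ℝ) (1 - ρ ^ 2)) :
    Filter.Tendsto (fun D2 : ℝ =>
        (N1 * (((1 - ρ ^ 2) / (D1 * (1 - ρ ^ 2 / (1 - D1)))) ^ (1 / κ) - 1)
            + N2 * (((1 - ρ ^ 2 / (1 - D1)) / D2) ^ (1 / κ) - 1)
              * ((1 - ρ ^ 2) / (D1 * (1 - ρ ^ 2 / (1 - D1)))) ^ (1 / κ)) /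
        (N1 * (D1 ^ (-1 / κ) - 1)
            + N2 * D1 ^ (-1 / κ) * max 0 (((1 - ρ ^ 2) / D2) ^ (1 / κ) - 1)))
      (nhdsWithin 0 (Set.Ioi 0)) (nhds 1) := by
  obtain ⟨hρ0, hρ1⟩ := hρ
  obtain ⟨hD0, hD1'⟩ := hD1
  have hρ2 : (0:ℝ) < 1 - ρ^2 := by nlinarith
  have hδ : (0:ℝ) < 1 - D1 := by nlinarith
  have hδρ : ρ^2 < 1 - D1 := by nlinarith
  have hE : (0:ℝ) < 1 - ρ^2/(1-D1) := by
    rw [sub_pos, div_lt_one hδ]; exact hδρ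
  have hr : 0 < 1/κ := by positivity
  set r := 1/κ with hrdef
  set E := 1 - ρ^2/(1-D1) with hEdef
  set A := ((1-ρ^2)/(D1*E)) ^ r with hAdef
  have hApos : 0 < A := Real.rpow_pos_of_pos (by positivity) r
  set K := N2 * ((1-ρ^2)/D1) ^ r with hKdef
  have hKpos : 0 < K := by
    have := Real.rpow_pos_of_pos (show (0:ℝ) < (1-ρ^2)/D1 by positivity) r
    positivity
  set c1 := N1*(A-1) - N2*A with hc1
  set c2 := N1*(D1^(-r)-1) - N2*D1^(-r) with hc2
  have key : A * E ^ r = ((1-ρ^2)/D1) ^ r := by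
    rw [hAdef, ← Real.mul_rpow (by positivity) hE.le]
    congr 1
    field_simp
  have key2 : D1 ^ (-r) * (1-ρ^2) ^ r = ((1-ρ^2)/D1) ^ r := by
    rw [Real.rpow_neg hD0.le, Real.div_rpow hρ2.le hD0.le, div_eq_mul_inv, mul_comm]
  have ht : Filter.Tendsto (fun D2 : ℝ => D2 ^ r) (nhdsWithin 0 (Set.Ioi 0)) (nhds 0) := by
    have hc : ContinuousAt (fun x : ℝ => x ^ r) 0 :=
      Real.continuousAt_rpow_const 0 r (Or.inr hr.le)
    have := hc.tendsto
    rw [Real.zero_rpow hr.ne'] at this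
    exact this.mono_left nhdsWithin_le_nhds
  have hlim : Filter.Tendsto (fun D2 : ℝ => (c1 * D2^r + K)/(c2 * D2^r + K))
      (nhdsWithin 0 (Set.Ioi 0)) (nhds 1) := by
    have h1 : Filter.Tendsto (fun D2 : ℝ => c1 * D2^r + K) (nhdsWithin 0 (Set.Ioi 0))
        (nhds (c1*0+K)) := (ht.const_mul c1).add_const K
    have h2 : Filter.Tendsto (fun D2 : ℝ => c2 * D2^r + K) (nhdsWithin 0 (Set.Ioi 0))
        (nhds (c2*0+K)) := (ht.const_mul c2).add_const K
    have h3 := h1.div h2 (by simp [hKpos.ne'])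
    simp only [mul_zero, zero_add, div_self hKpos.ne'] at h3
    exact h3
  refine Filter.Tendsto.congr' ?_ hlim
  filter_upwards [Ioo_mem_nhdsGT_of_mem (Set.left_mem_Ico.mpr hρ2)] with D2 hD2
  obtain ⟨hD2a, hD2b⟩ := hD2
  have ht0 : D2 ^ r ≠ 0 := (Real.rpow_pos_of_pos hD2a r).ne'
  have hmax : max 0 (((1 - ρ ^ 2) / D2) ^ r - 1) = ((1 - ρ ^ 2) / D2) ^ r - 1 := by
    rw [max_eq_right]
    rw [sub_nonneg]
    calc (1:ℝ) = 1 ^ r := (Real.one_rpow r).symm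
    _ ≤ ((1 - ρ ^ 2) / D2) ^ r := by
        apply Real.rpow_le_rpow zero_le_one _ hr.le
        rw [le_div_iff₀ hD2a]; linarith
  have hneg : (-1)/κ = -r := by rw [hrdef]; ring
  have hdiv1 : ((E) / D2) ^ r = E ^ r / D2 ^ r := Real.div_rpow hE.le hD2a.le r
  have hdiv2 : ((1 - ρ ^ 2) / D2) ^ r = (1-ρ^2) ^ r / D2 ^ r := Real.div_rpow hρ2.le hD2a.le r
  show (c1 * D2^r + K)/(c2 * D2^r + K) = _
  rw [hneg, hmax, hdiv1, hdiv2]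
  have enum : N1 * (A - 1) + N2 * (E ^ r / D2 ^ r - 1) * A = (c1 * D2^r + K) / D2^r := by
    rw [hKdef, ← key, hc1]; field_simp; ring
  have eden : N1 * (D1 ^ (-r) - 1) + N2 * D1 ^ (-r) * ((1-ρ^2) ^ r / D2 ^ r - 1)
      = (c2 * D2^r + K) / D2^r := by
    rw [hKdef, ← key2, hc2]; field_simp; ring
  rw [enum, eden, div_div_div_comm, div_self ht0, div_one]
end

section
/- Fix ρ ∈ (0,1), κ > 0, N1 ≥ N2 > 0. Define, for D1, D2 ∈ (0,1) with δ := 1−D1: A(ν) := ((1−ρ²)/(D1·(1−ν²δ) − (ρ−νδ)²))^{1/κ}, P(ν) := N1·(A(ν) − 1) + N2·(((1−ν²δ)/D2)^{1/κ} − 1)·A(ν), P_sep := inf{ P(ν) : ν ∈ [ρ, min(1/ρ, ρ/δ, √((1−D2)/δ))] }, and P_outer := N1·(D1^{−1/κ} − 1) + N2·D1^{−1/κ}·max{0, ((1−ρ²)/D2)^{1/κ} − 1}. Then: (1) for every fixed D2 ∈ (0, 1−ρ²], the ratio P_sep/P_outer (as a function of D1) tends to 1 as D1 → 0 from the right; and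 (2) for every fixed D1 ∈ (0, 1−ρ²), the ratio P_sep/P_outer (as a function of D2) tends to 1 as D2 → 0 from the right. -/
/-!
Write `s = 1 / κ`. The denominator of `A(ν)` equals `D1 (1 - ρ²) - (1 - D1) (ν - ρ)²`, so on the
admissible interval, which lies inside `[ρ, ρ / (1 - D1)]`, it is squeezed between its values at
the two endpoints. This gives `D1^(-s) ≤ A(ν) ≤ A(ρ / (1 - D1))` and
`((1 - ν² (1 - D1)) / D2)^s A(ν) ≥ ((1 - ρ²) / (D1 D2))^s`, hence a lower bound on `P_sep`;
evaluating `P` at `ν = ρ` (as `D1 → 0`), resp. at `ν = ρ / (1 - D1)` (as `D2 → 0`), bounds `P_sep`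
from above. Multiplied by `t^s`, `t` the vanishing distortion, both bounds and `P_outer` tend to
the same positive limit.
-/

open Real Set Filter Topology

lemma Real.rpow_mul_rpow_neg {t : ℝ} (ht : 0 < t) (s : ℝ) : t ^ s * t ^ (-s) = 1 := by
  rw [Real.rpow_neg ht.le, mul_inv_cancel₀ (Real.rpow_pos_of_pos ht s).ne']

lemma Real.rpow_mul_div_rpow {t x : ℝ} (ht : 0 < t) (hx : 0 ≤ x) (s : ℝ) :
    t ^ s * (x / t) ^ s = x ^ s := by
  rw [← Real.mul_rpow ht.le (div_nonneg hx ht.le), mul_div_cancel₀ x ht.ne']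

theorem tendsto_div_of_squeeze {α : Type*} {l : Filter α} {g lo f hi d : α → ℝ} {L : ℝ}
    (hL : 0 < L) (hg : ∀ᶠ t in l, 0 < g t)
    (hlo : Tendsto (fun t => g t * lo t) l (𝓝 L)) (hhi : Tendsto (fun t => g t * hi t) l (𝓝 L))
    (hd : Tendsto (fun t => g t * d t) l (𝓝 L)) (hf : ∀ᶠ t in l, lo t ≤ f t ∧ f t ≤ hi t) :
    Tendsto (fun t => f t / d t) l (𝓝 1) := by
  have hgd : ∀ᶠ t in l, 0 < g t ∧ 0 < d t := by
    filter_upwards [hg, hd.eventually (lt_mem_nhds hL)] with t hgt hdt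
    exact ⟨hgt, pos_of_mul_pos_right hdt hgt.le⟩
  have ratio : ∀ {e : α → ℝ}, Tendsto (fun t => g t * e t) l (𝓝 L) →
      Tendsto (fun t => e t / d t) l (𝓝 1) := fun he => by
    refine (div_self hL.ne' ▸ he.div hd hL.ne').congr' ?_
    filter_upwards [hgd] with t ⟨hgt, _⟩
    exact mul_div_mul_left _ _ hgt.ne'
  refine tendsto_of_tendsto_of_tendsto_of_le_of_le' (ratio hlo) (ratio hhi) ?_ ?_
  · filter_upwards [hf, hgd] with t hft ⟨_, hdt⟩
    exact div_le_div_of_nonneg_right hft.1 hdt.le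
  · filter_upwards [hf, hgd] with t hft ⟨_, hdt⟩
    exact div_le_div_of_nonneg_right hft.2 hdt.le

noncomputable section

namespace SeparateCoding

def gap (ρ D1 ν : ℝ) : ℝ := D1 * (1 - ν ^ 2 * (1 - D1)) - (ρ - ν * (1 - D1)) ^ 2

/-- The paper's `A(ν)`, with `s` in place of `1 / κ`. -/
def gain (ρ s D1 ν : ℝ) : ℝ := ((1 - ρ ^ 2) / gap ρ D1 ν) ^ s

def sepPower (ρ s N1 N2 D1 D2 ν : ℝ) : ℝ :=
  N1 * (gain ρ s D1 ν - 1) + N2 * (((1 - ν ^ 2 * (1 - D1)) / D2) ^ s - 1) * gain ρ s D1 ν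

def nuInterval (ρ D1 D2 : ℝ) : Set ℝ :=
  Icc ρ (min (1 / ρ) (min (ρ / (1 - D1)) (√((1 - D2) / (1 - D1)))))

def sepPowerMin (ρ s N1 N2 D1 D2 : ℝ) : ℝ := sInf (sepPower ρ s N1 N2 D1 D2 '' nuInterval ρ D1 D2)

def outerPower (ρ s N1 N2 D1 D2 : ℝ) : ℝ :=
  N1 * (D1 ^ (-s) - 1) + N2 * D1 ^ (-s) * max 0 (((1 - ρ ^ 2) / D2) ^ s - 1)

def lowerPower (ρ s N1 N2 D1 D2 : ℝ) : ℝ :=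
  N1 * (D1 ^ (-s) - 1) + N2 * ((1 - ρ ^ 2) / D1 / D2) ^ s - N2 * gain ρ s D1 (ρ / (1 - D1))

variable {ρ s N1 N2 D1 D2 ν ν' : ℝ}

lemma gap_eq : gap ρ D1 ν = D1 * (1 - ρ ^ 2) - (1 - D1) * (ν - ρ) ^ 2 := by
  unfold gap; ring

lemma gap_rho : gap ρ D1 ρ = D1 * (1 - ρ ^ 2) := by
  rw [gap_eq]; ring

lemma gap_rho_div (hD1 : D1 ≠ 1) :
    gap ρ D1 (ρ / (1 - D1)) = D1 * (1 - (ρ / (1 - D1)) ^ 2 * (1 - D1)) := by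
  rw [gap, div_mul_cancel₀ ρ (sub_ne_zero.mpr hD1.symm)]; ring

lemma one_sub_rho_div_sq_mul_pos (hD1ρ : D1 < 1 - ρ ^ 2) :
    0 < 1 - (ρ / (1 - D1)) ^ 2 * (1 - D1) := by
  have hδ : 0 < 1 - D1 := by nlinarith
  rw [div_pow, sq (1 - D1), div_mul_eq_div_div, div_mul_cancel₀ _ hδ.ne', sub_pos,
    div_lt_one hδ]
  linarith

lemma gap_le (hD1 : D1 ≤ 1) : gap ρ D1 ν ≤ D1 * (1 - ρ ^ 2) := by
  rw [gap_eq]; nlinarith [sq_nonneg (ν - ρ)]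

lemma gap_le_mul_one_sub : gap ρ D1 ν ≤ D1 * (1 - ν ^ 2 * (1 - D1)) := by
  unfold gap; nlinarith [sq_nonneg (ρ - ν * (1 - D1))]

lemma gap_rho_div_le (hD1 : D1 < 1) (hν : ν ∈ Icc ρ (ρ / (1 - D1))) :
    gap ρ D1 (ρ / (1 - D1)) ≤ gap ρ D1 ν := by
  have hδ : 0 < 1 - D1 := by linarith
  have hρν : ρ / (1 - D1) - ρ ≥ ν - ρ := by linarith [hν.2]
  rw [gap_eq, gap_eq]
  nlinarith [mul_le_mul hρν hρν (by linarith [hν.1]) (by linarith [hν.1])]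

lemma gap_rho_div_pos (hD1 : 0 < D1) (hD1ρ : D1 < 1 - ρ ^ 2) :
    0 < gap ρ D1 (ρ / (1 - D1)) := by
  rw [gap_rho_div (by nlinarith)]
  exact mul_pos hD1 (one_sub_rho_div_sq_mul_pos hD1ρ)

lemma gap_pos (hD1 : 0 < D1) (hD1ρ : D1 < 1 - ρ ^ 2) (hν : ν ∈ Icc ρ (ρ / (1 - D1))) :
    0 < gap ρ D1 ν :=
  (gap_rho_div_pos hD1 hD1ρ).trans_le (gap_rho_div_le (by nlinarith) hν)

lemma gain_rho (hD1 : 0 < D1) (hρ : ρ ^ 2 < 1) : gain ρ s D1 ρ = D1 ^ (-s) := by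
  rw [gain, gap_rho, div_mul_cancel_right₀ (by linarith), Real.rpow_neg hD1.le,
    Real.inv_rpow hD1.le]

lemma rpow_mul_gain_rho_div (hD1 : 0 < D1) (hD1ρ : D1 < 1 - ρ ^ 2) :
    (1 - (ρ / (1 - D1)) ^ 2 * (1 - D1)) ^ s * gain ρ s D1 (ρ / (1 - D1))
      = ((1 - ρ ^ 2) / D1) ^ s := by
  rw [gain, gap_rho_div (by nlinarith), div_mul_eq_div_div,
    Real.rpow_mul_div_rpow (one_sub_rho_div_sq_mul_pos hD1ρ) (div_nonneg (by nlinarith) hD1.le)]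

lemma rpow_neg_le_gain (hD1 : 0 < D1) (hD1' : D1 ≤ 1) (hs : 0 ≤ s) (hgap : 0 < gap ρ D1 ν) :
    D1 ^ (-s) ≤ gain ρ s D1 ν := by
  rw [Real.rpow_neg hD1.le, ← Real.inv_rpow hD1.le]
  refine Real.rpow_le_rpow (by positivity) ?_ hs
  rw [inv_eq_one_div, div_le_div_iff₀ hD1 hgap]
  linarith [gap_le (ρ := ρ) (ν := ν) hD1']

lemma gain_le_gain (hs : 0 ≤ s) (hρ : ρ ^ 2 ≤ 1) (hgap : 0 < gap ρ D1 ν')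
    (h : gap ρ D1 ν' ≤ gap ρ D1 ν) : gain ρ s D1 ν ≤ gain ρ s D1 ν' :=
  Real.rpow_le_rpow (div_nonneg (by linarith) (hgap.trans_le h).le)
    (div_le_div_of_nonneg_left (by linarith) hgap h) hs

lemma rpow_le_rpow_mul_gain (hD1 : 0 < D1) (hD2 : 0 < D2) (hs : 0 ≤ s) (hρ : ρ ^ 2 ≤ 1)
    (hgap : 0 < gap ρ D1 ν) :
    ((1 - ρ ^ 2) / D1 / D2) ^ s ≤ ((1 - ν ^ 2 * (1 - D1)) / D2) ^ s * gain ρ s D1 ν := by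
  have hle := gap_le_mul_one_sub (ρ := ρ) (D1 := D1) (ν := ν)
  have hb : 0 < 1 - ν ^ 2 * (1 - D1) := pos_of_mul_pos_right (hgap.trans_le hle) hD1.le
  rw [gain, ← Real.mul_rpow (by positivity) (div_nonneg (by linarith) hgap.le)]
  refine Real.rpow_le_rpow (by positivity) ?_ hs
  rw [div_div, div_mul_div_comm, div_le_div_iff₀ (by positivity) (by positivity)]
  nlinarith [mul_le_mul_of_nonneg_left hle (by nlinarith : 0 ≤ (1 - ρ ^ 2) * D2)]

lemma lowerPower_le_sepPower (hD1 : 0 < D1) (hD1ρ : D1 < 1 - ρ ^ 2) (hD2 : 0 < D2)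
    (hs : 0 ≤ s) (hN1 : 0 ≤ N1) (hN2 : 0 ≤ N2) (hν : ν ∈ Icc ρ (ρ / (1 - D1))) :
    lowerPower ρ s N1 N2 D1 D2 ≤ sepPower ρ s N1 N2 D1 D2 ν := by
  have hgap := gap_pos hD1 hD1ρ hν
  have hρ1 : ρ ^ 2 ≤ 1 := by nlinarith
  have hA := rpow_neg_le_gain hD1 (by nlinarith) hs hgap
  have hAmax := gain_le_gain hs hρ1 (gap_rho_div_pos hD1 hD1ρ) (gap_rho_div_le (by nlinarith) hν)
  have hfA := rpow_le_rpow_mul_gain hD1 hD2 hs hρ1 hgap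
  unfold lowerPower sepPower
  nlinarith [mul_le_mul_of_nonneg_left hA hN1, mul_le_mul_of_nonneg_left hAmax hN2,
    mul_le_mul_of_nonneg_left hfA hN2]

lemma nuInterval_subset : nuInterval ρ D1 D2 ⊆ Icc ρ (ρ / (1 - D1)) :=
  Icc_subset_Icc_right (min_le_of_right_le (min_le_left _ _))

lemma rho_mem_nuInterval (hρ : 0 < ρ) (hρ1 : ρ < 1) (hD1 : 0 ≤ D1) (hD1' : D1 < 1)
    (hD2 : D2 ≤ 1 - ρ ^ 2) : ρ ∈ nuInterval ρ D1 D2 := by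
  have hδ : 0 < 1 - D1 := by linarith
  refine ⟨le_rfl, le_min ?_ (le_min ?_ ?_)⟩
  · rw [le_div_iff₀ hρ]; nlinarith
  · rw [le_div_iff₀ hδ]; nlinarith
  · refine Real.le_sqrt_of_sq_le ?_
    rw [le_div_iff₀ hδ]; nlinarith

lemma rho_div_mem_nuInterval (hρ : 0 < ρ) (hD1 : 0 ≤ D1) (hD1ρ : D1 < 1 - ρ ^ 2)
    (hD2 : D2 ≤ 1 - (ρ / (1 - D1)) ^ 2 * (1 - D1)) : ρ / (1 - D1) ∈ nuInterval ρ D1 D2 := by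
  have hδ : 0 < 1 - D1 := by nlinarith
  refine ⟨?_, le_min ?_ (le_min le_rfl ?_)⟩
  · rw [le_div_iff₀ hδ]; nlinarith
  · rw [div_le_div_iff₀ hδ hρ]; nlinarith
  · exact Real.le_sqrt_of_sq_le ((le_div_iff₀ hδ).mpr (by linarith))

lemma bddBelow_sepPower_image (hD1 : 0 < D1) (hD1ρ : D1 < 1 - ρ ^ 2) (hD2 : 0 < D2) (hs : 0 ≤ s)
    (hN1 : 0 ≤ N1) (hN2 : 0 ≤ N2) :
    lowerPower ρ s N1 N2 D1 D2 ∈ lowerBounds (sepPower ρ s N1 N2 D1 D2 '' nuInterval ρ D1 D2) :=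
  forall_mem_image.mpr fun _ hν =>
    lowerPower_le_sepPower hD1 hD1ρ hD2 hs hN1 hN2 (nuInterval_subset hν)

lemma lowerPower_le_sepPowerMin (hD1 : 0 < D1) (hD1ρ : D1 < 1 - ρ ^ 2) (hD2 : 0 < D2)
    (hs : 0 ≤ s) (hN1 : 0 ≤ N1) (hN2 : 0 ≤ N2) (hne : (nuInterval ρ D1 D2).Nonempty) :
    lowerPower ρ s N1 N2 D1 D2 ≤ sepPowerMin ρ s N1 N2 D1 D2 :=
  le_csInf (hne.image _) (bddBelow_sepPower_image hD1 hD1ρ hD2 hs hN1 hN2)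

lemma sepPowerMin_le (hD1 : 0 < D1) (hD1ρ : D1 < 1 - ρ ^ 2) (hD2 : 0 < D2) (hs : 0 ≤ s)
    (hN1 : 0 ≤ N1) (hN2 : 0 ≤ N2) (hν : ν ∈ nuInterval ρ D1 D2) :
    sepPowerMin ρ s N1 N2 D1 D2 ≤ sepPower ρ s N1 N2 D1 D2 ν :=
  csInf_le ⟨_, bddBelow_sepPower_image hD1 hD1ρ hD2 hs hN1 hN2⟩ (mem_image_of_mem _ hν)

lemma tendsto_rpow_mul_outerPower_D1 (hs : 0 < s) (hc : 1 ≤ ((1 - ρ ^ 2) / D2) ^ s) :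
    Tendsto (fun t => t ^ s * outerPower ρ s N1 N2 t D2) (𝓝[>] 0)
      (𝓝 (N1 + N2 * (((1 - ρ ^ 2) / D2) ^ s - 1))) := by
  have hcont : ContinuousAt (fun t : ℝ =>
      N1 * (1 - t ^ s) + N2 * (((1 - ρ ^ 2) / D2) ^ s - 1)) 0 := by
    fun_prop (disch := exact Or.inr hs.le)
  refine (tendsto_nhdsWithin_of_tendsto_nhds hcont.tendsto).congr' ?_ |>.trans_eq (congrArg 𝓝 ?_)
  · filter_upwards [self_mem_nhdsWithin] with t ht
    rw [outerPower, max_eq_right (by linarith)]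
    linear_combination (-(N1 + N2 * (((1 - ρ ^ 2) / D2) ^ s - 1))) * Real.rpow_mul_rpow_neg ht s
  · rw [Real.zero_rpow hs.ne']; ring

lemma tendsto_rpow_mul_sepPower_rho_D1 (hs : 0 < s) (hρ : ρ ^ 2 < 1) :
    Tendsto (fun t => t ^ s * sepPower ρ s N1 N2 t D2 ρ) (𝓝[>] 0)
      (𝓝 (N1 + N2 * (((1 - ρ ^ 2) / D2) ^ s - 1))) := by
  have hcont : ContinuousAt (fun t : ℝ =>
      N1 * (1 - t ^ s) + N2 * (((1 - ρ ^ 2 * (1 - t)) / D2) ^ s - 1)) 0 := by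
    fun_prop (disch := exact Or.inr hs.le)
  refine (tendsto_nhdsWithin_of_tendsto_nhds hcont.tendsto).congr' ?_ |>.trans_eq (congrArg 𝓝 ?_)
  · filter_upwards [self_mem_nhdsWithin] with t ht
    rw [sepPower, gain_rho ht hρ]
    linear_combination (-(N1 + N2 * (((1 - ρ ^ 2 * (1 - t)) / D2) ^ s - 1)))
      * Real.rpow_mul_rpow_neg ht s
  · rw [Real.zero_rpow hs.ne', sub_zero, mul_one, mul_one]

lemma tendsto_rpow_mul_lowerPower_D1 (hs : 0 < s) (hρ : ρ ^ 2 < 1) (hD2 : 0 ≤ D2) :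
    Tendsto (fun t => t ^ s * lowerPower ρ s N1 N2 t D2) (𝓝[>] 0)
      (𝓝 (N1 + N2 * (((1 - ρ ^ 2) / D2) ^ s - 1))) := by
  have hρ2 : 0 < 1 - ρ ^ 2 := by linarith
  have hcont : ContinuousAt (fun t : ℝ => N1 * (1 - t ^ s) + N2 * ((1 - ρ ^ 2) / D2) ^ s
      - N2 * ((1 - ρ ^ 2) / (1 - (ρ / (1 - t)) ^ 2 * (1 - t))) ^ s) 0 := by
    fun_prop (disch := first | exact Or.inr hs.le | (norm_num <;> linarith))
  refine (tendsto_nhdsWithin_of_tendsto_nhds hcont.tendsto).congr' ?_ |>.trans_eq (congrArg 𝓝 ?_)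
  · filter_upwards [Ioo_mem_nhdsGT hρ2] with t ⟨ht0, htρ⟩
    have hy := one_sub_rho_div_sq_mul_pos htρ
    rw [lowerPower, gain, gap_rho_div (by nlinarith), div_mul_eq_div_div_swap, div_right_comm]
    linear_combination (-N1) * Real.rpow_mul_rpow_neg ht0 s
      - N2 * Real.rpow_mul_div_rpow ht0 (div_nonneg hρ2.le hD2) s
      + N2 * Real.rpow_mul_div_rpow ht0 (div_nonneg hρ2.le hy.le) s
  · rw [Real.zero_rpow hs.ne', sub_zero, div_one, mul_one, mul_one, div_self hρ2.ne',
      Real.one_rpow]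
    ring

lemma tendsto_sepPowerMin_div_outerPower_D1 (hρ : 0 < ρ) (hρ1 : ρ < 1) (hs : 0 < s)
    (hN2 : 0 < N2) (hN : N2 ≤ N1) (hD2 : 0 < D2) (hD2' : D2 ≤ 1 - ρ ^ 2) :
    Tendsto (fun t => sepPowerMin ρ s N1 N2 t D2 / outerPower ρ s N1 N2 t D2) (𝓝[>] 0) (𝓝 1) := by
  have hρ2 : ρ ^ 2 < 1 := by nlinarith
  have hc : 1 ≤ ((1 - ρ ^ 2) / D2) ^ s := Real.one_le_rpow ((one_le_div hD2).mpr hD2') hs.le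
  refine tendsto_div_of_squeeze ?_
    (eventually_mem_nhdsWithin.mono fun t ht => Real.rpow_pos_of_pos ht s)
    (tendsto_rpow_mul_lowerPower_D1 hs hρ2 hD2.le) (tendsto_rpow_mul_sepPower_rho_D1 hs hρ2)
    (tendsto_rpow_mul_outerPower_D1 hs hc) ?_
  · nlinarith
  filter_upwards [Ioo_mem_nhdsGT (by linarith : (0 : ℝ) < 1 - ρ ^ 2)] with t ⟨ht0, htρ⟩
  have hmem : ρ ∈ nuInterval ρ t D2 := rho_mem_nuInterval hρ hρ1 ht0.le (by nlinarith) hD2'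
  exact ⟨lowerPower_le_sepPowerMin ht0 htρ hD2 hs.le (by linarith) hN2.le ⟨ρ, hmem⟩,
    sepPowerMin_le ht0 htρ hD2 hs.le (by linarith) hN2.le hmem⟩

lemma tendsto_rpow_mul_outerPower_D2 (hs : 0 < s) (hD1 : 0 < D1) (hρ : ρ ^ 2 < 1) :
    Tendsto (fun t => t ^ s * outerPower ρ s N1 N2 D1 t) (𝓝[>] 0)
      (𝓝 (N2 * ((1 - ρ ^ 2) / D1) ^ s)) := by
  have hρ2 : 0 < 1 - ρ ^ 2 := by linarith
  have hcont : ContinuousAt (fun t : ℝ =>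
      N1 * (D1 ^ (-s) - 1) * t ^ s + N2 * D1 ^ (-s) * ((1 - ρ ^ 2) ^ s - t ^ s)) 0 := by
    fun_prop (disch := exact Or.inr hs.le)
  refine (tendsto_nhdsWithin_of_tendsto_nhds hcont.tendsto).congr' ?_ |>.trans_eq (congrArg 𝓝 ?_)
  · filter_upwards [Ioo_mem_nhdsGT hρ2] with t ⟨ht0, htρ⟩
    have hle : 1 ≤ ((1 - ρ ^ 2) / t) ^ s :=
      Real.one_le_rpow ((one_le_div ht0).mpr htρ.le) hs.le
    rw [outerPower, max_eq_right (by linarith)]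
    linear_combination (-(N2 * D1 ^ (-s))) * Real.rpow_mul_div_rpow ht0 hρ2.le s
  · rw [Real.zero_rpow hs.ne', Real.div_rpow hρ2.le hD1.le, Real.rpow_neg hD1.le]; ring

lemma tendsto_rpow_mul_sepPower_rho_div_D2 (hs : 0 < s) (hD1 : 0 < D1)
    (hD1ρ : D1 < 1 - ρ ^ 2) :
    Tendsto (fun t => t ^ s * sepPower ρ s N1 N2 D1 t (ρ / (1 - D1))) (𝓝[>] 0)
      (𝓝 (N2 * ((1 - ρ ^ 2) / D1) ^ s)) := by
  set A := gain ρ s D1 (ρ / (1 - D1))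
  have hcont : ContinuousAt (fun t : ℝ =>
      (N1 * (A - 1) - N2 * A) * t ^ s + N2 * ((1 - ρ ^ 2) / D1) ^ s) 0 := by
    fun_prop (disch := exact Or.inr hs.le)
  refine (tendsto_nhdsWithin_of_tendsto_nhds hcont.tendsto).congr' ?_ |>.trans_eq (congrArg 𝓝 ?_)
  · filter_upwards [self_mem_nhdsWithin] with t ht
    rw [sepPower]
    linear_combination (-N2 * A) * Real.rpow_mul_div_rpow ht
        (one_sub_rho_div_sq_mul_pos hD1ρ).le s
      - N2 * rpow_mul_gain_rho_div hD1 hD1ρ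
  · rw [Real.zero_rpow hs.ne']; ring

lemma tendsto_rpow_mul_lowerPower_D2 (hs : 0 < s) (hD1 : 0 < D1) (hρ : ρ ^ 2 ≤ 1) :
    Tendsto (fun t => t ^ s * lowerPower ρ s N1 N2 D1 t) (𝓝[>] 0)
      (𝓝 (N2 * ((1 - ρ ^ 2) / D1) ^ s)) := by
  set A := gain ρ s D1 (ρ / (1 - D1))
  have hcont : ContinuousAt (fun t : ℝ =>
      (N1 * (D1 ^ (-s) - 1) - N2 * A) * t ^ s + N2 * ((1 - ρ ^ 2) / D1) ^ s) 0 := by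
    fun_prop (disch := exact Or.inr hs.le)
  refine (tendsto_nhdsWithin_of_tendsto_nhds hcont.tendsto).congr' ?_ |>.trans_eq (congrArg 𝓝 ?_)
  · filter_upwards [self_mem_nhdsWithin] with t ht
    rw [lowerPower]
    linear_combination (-N2) * Real.rpow_mul_div_rpow ht (div_nonneg (sub_nonneg.mpr hρ) hD1.le) s
  · rw [Real.zero_rpow hs.ne']; ring

lemma tendsto_sepPowerMin_div_outerPower_D2 (hρ : 0 < ρ) (hs : 0 < s) (hN2 : 0 < N2)
    (hN : N2 ≤ N1) (hD1 : 0 < D1) (hD1ρ : D1 < 1 - ρ ^ 2) :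
    Tendsto (fun t => sepPowerMin ρ s N1 N2 D1 t / outerPower ρ s N1 N2 D1 t) (𝓝[>] 0) (𝓝 1) := by
  have hρ2 : ρ ^ 2 < 1 := by linarith
  refine tendsto_div_of_squeeze ?_
    (eventually_mem_nhdsWithin.mono fun t ht => Real.rpow_pos_of_pos ht s)
    (tendsto_rpow_mul_lowerPower_D2 (N1 := N1) hs hD1 hρ2.le)
    (tendsto_rpow_mul_sepPower_rho_div_D2 (N1 := N1) hs hD1 hD1ρ)
    (tendsto_rpow_mul_outerPower_D2 hs hD1 hρ2) ?_
  · exact mul_pos hN2 (Real.rpow_pos_of_pos (div_pos (by linarith) hD1) s)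
  filter_upwards [Ioo_mem_nhdsGT (one_sub_rho_div_sq_mul_pos hD1ρ)] with t ⟨ht0, hty⟩
  have hmem : ρ / (1 - D1) ∈ nuInterval ρ D1 t := rho_div_mem_nuInterval hρ hD1.le hD1ρ hty.le
  exact ⟨lowerPower_le_sepPowerMin hD1 hD1ρ ht0 hs.le (by linarith) hN2.le ⟨_, hmem⟩,
    sepPowerMin_le hD1 hD1ρ ht0 hs.le (by linarith) hN2.le hmem⟩

end SeparateCoding

end

/-- Fix `ρ ∈ (0,1)`, `κ > 0`, `N1 ≥ N2 > 0`. With `δ := 1−D1`,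
`A(ν) := ((1−ρ²)/(D1(1−ν²δ) − (ρ−νδ)²))^{1/κ}`,
`P(ν) := N1(A(ν) − 1) + N2(((1−ν²δ)/D2)^{1/κ} − 1)·A(ν)`,
`P_sep := inf{P(ν) : ν ∈ [ρ, min(1/ρ, ρ/δ, √((1−D2)/δ))]}` and
`P_outer := N1(D1^{−1/κ} − 1) + N2·D1^{−1/κ}·max{0, ((1−ρ²)/D2)^{1/κ} − 1}`:
(1) for every fixed `D2 ∈ (0, 1−ρ²]`, `P_sep/P_outer → 1` as `D1 → 0⁺`; and
(2) for every fixed `D1 ∈ (0, 1−ρ²)`, `P_sep/P_outer → 1` as `D2 → 0⁺`. -/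
theorem separate_coding_optimal_low_distortion (ρ κ N1 N2 : ℝ)
    (hρ : ρ ∈ Set.Ioo (0 : ℝ) 1) (hκ : 0 < κ) (hN2 : 0 < N2) (hN : N2 ≤ N1) :
    (∀ D2 ∈ Set.Ioc (0 : ℝ) (1 - ρ ^ 2),
      Filter.Tendsto (fun D1 : ℝ =>
        sInf ((fun ν : ℝ =>
            N1 * (((1 - ρ ^ 2) /
                (D1 * (1 - ν ^ 2 * (1 - D1)) - (ρ - ν * (1 - D1)) ^ 2)) ^ (1 / κ) - 1)
            + N2 * (((1 - ν ^ 2 * (1 - D1)) / D2) ^ (1 / κ) - 1)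
              * ((1 - ρ ^ 2) /
                (D1 * (1 - ν ^ 2 * (1 - D1)) - (ρ - ν * (1 - D1)) ^ 2)) ^ (1 / κ)) ''
          Set.Icc ρ (min (1 / ρ)
            (min (ρ / (1 - D1)) (Real.sqrt ((1 - D2) / (1 - D1)))))) /
        (N1 * (D1 ^ (-1 / κ) - 1)
          + N2 * D1 ^ (-1 / κ) * max 0 (((1 - ρ ^ 2) / D2) ^ (1 / κ) - 1)))
        (nhdsWithin 0 (Set.Ioi 0)) (nhds 1)) ∧
    (∀ D1 ∈ Set.Ioo (0 : ℝ) (1 - ρ ^ 2),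
      Filter.Tendsto (fun D2 : ℝ =>
        sInf ((fun ν : ℝ =>
            N1 * (((1 - ρ ^ 2) /
                (D1 * (1 - ν ^ 2 * (1 - D1)) - (ρ - ν * (1 - D1)) ^ 2)) ^ (1 / κ) - 1)
            + N2 * (((1 - ν ^ 2 * (1 - D1)) / D2) ^ (1 / κ) - 1)
              * ((1 - ρ ^ 2) /
                (D1 * (1 - ν ^ 2 * (1 - D1)) - (ρ - ν * (1 - D1)) ^ 2)) ^ (1 / κ)) ''
          Set.Icc ρ (min (1 / ρ)
            (min (ρ / (1 - D1)) (Real.sqrt ((1 - D2) / (1 - D1)))))) /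
        (N1 * (D1 ^ (-1 / κ) - 1)
          + N2 * D1 ^ (-1 / κ) * max 0 (((1 - ρ ^ 2) / D2) ^ (1 / κ) - 1)))
        (nhdsWithin 0 (Set.Ioi 0)) (nhds 1)) := by
  obtain ⟨hρ0, hρ1⟩ := hρ
  have hs : 0 < 1 / κ := one_div_pos.mpr hκ
  simp only [neg_div]
  exact ⟨fun D2 hD2 =>
      SeparateCoding.tendsto_sepPowerMin_div_outerPower_D1 hρ0 hρ1 hs hN2 hN hD2.1 hD2.2,
    fun D1 hD1 => SeparateCoding.tendsto_sepPowerMin_div_outerPower_D2 hρ0 hs hN2 hN hD1.1 hD1.2⟩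
end

section
/- Let ρ ∈ (0,1), κ > 0, N1 ≥ N2 > 0, and D1, D2 ∈ (0,1) with (1−D1)·(1−D2) ≥ ρ²; set δ := 1−D1. Define Pρ := N1·(D1^{−1/κ} − 1) + N2·D1^{−1/κ}·(((1−ρ²δ)/D2)^{1/κ} − 1) and P_outer := N1·(D1^{−1/κ} − 1) + N2·D1^{−1/κ}·(((1−ρ²)/D2)^{1/κ} − 1). Then Pρ / P_outer ≤ 1 + (1+ρ)^{1/κ}·((1+ρ²)^{1/κ} − 1) / ((1+ρ)^{1/κ} − (1−ρ)^{1/κ}). -/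
set_option maxHeartbeats 1000000 in
/-- For `ρ ∈ (0,1)`, `κ > 0`, `N1 ≥ N2 > 0`, `D1, D2 ∈ (0,1)` with
`(1−D1)(1−D2) ≥ ρ²` and `δ := 1−D1`, with
`Pρ := N1(D1^{−1/κ} − 1) + N2·D1^{−1/κ}·(((1−ρ²δ)/D2)^{1/κ} − 1)` and
`P_outer := N1(D1^{−1/κ} − 1) + N2·D1^{−1/κ}·(((1−ρ²)/D2)^{1/κ} − 1)`, one has
`Pρ/P_outer ≤ 1 + (1+ρ)^{1/κ}((1+ρ²)^{1/κ} − 1)/((1+ρ)^{1/κ} − (1−ρ)^{1/κ})`. -/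
theorem power_ratio_bound_first_half (ρ κ N1 N2 D1 D2 : ℝ)
    (hρ : ρ ∈ Set.Ioo (0 : ℝ) 1) (hκ : 0 < κ) (hN2 : 0 < N2) (hN : N2 ≤ N1)
    (hD1 : D1 ∈ Set.Ioo (0 : ℝ) 1) (hD2 : D2 ∈ Set.Ioo (0 : ℝ) 1)
    (hreg : (1 - D1) * (1 - D2) ≥ ρ ^ 2) :
    (N1 * (D1 ^ (-1 / κ) - 1)
        + N2 * D1 ^ (-1 / κ) * (((1 - ρ ^ 2 * (1 - D1)) / D2) ^ (1 / κ) - 1)) /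
      (N1 * (D1 ^ (-1 / κ) - 1)
        + N2 * D1 ^ (-1 / κ) * (((1 - ρ ^ 2) / D2) ^ (1 / κ) - 1))
      ≤ 1 + (1 + ρ) ^ (1 / κ) * ((1 + ρ ^ 2) ^ (1 / κ) - 1) /
          ((1 + ρ) ^ (1 / κ) - (1 - ρ) ^ (1 / κ)) := by
  obtain ⟨hρ0, hρ1⟩ := hρ
  obtain ⟨hD10, hD11⟩ := hD1
  obtain ⟨hD20, hD21⟩ := hD2
  set s : ℝ := 1 / κ with hs
  have hs0 : 0 < s := by positivity
  have h1ρ2 : 0 < 1 - ρ ^ 2 := by nlinarith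
  have hnum0 : 0 < 1 - ρ ^ 2 * (1 - D1) := by nlinarith
  -- D1 ≤ 1 - ρ²
  have hD1le : D1 ≤ 1 - ρ ^ 2 := by nlinarith
  -- D1 * D2 ≤ (1 - ρ)²
  have hDD : D1 * D2 ≤ (1 - ρ) ^ 2 := by
    nlinarith [sq_nonneg (D1 - D2), sq_nonneg (2 - D1 - D2 - 2*ρ), sq_nonneg (D1 + D2),
      mul_pos hD10 hD20]
  have hDDpos : 0 < D1 * D2 := mul_pos hD10 hD20
  set u : ℝ := (1 - ρ ^ 2) / (D1 * D2) with hu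
  have hupos : 0 < u := by positivity
  have hu1ρ : 1 + ρ ≤ u * (1 - ρ) := by
    rw [hu, div_mul_eq_mul_div, le_div_iff₀ hDDpos]
    nlinarith
  have hu1 : 1 ≤ u := by nlinarith
  -- rpow identities
  have hA : D1 ^ (-1 / κ) = (D1⁻¹) ^ s := by
    rw [Real.inv_rpow hD10.le, ← Real.rpow_neg hD10.le, neg_div]
  have hA1 : 1 ≤ D1 ^ (-1 / κ) := by
    rw [hA]
    have hinv : (1:ℝ) ≤ D1⁻¹ := (one_le_inv₀ hD10).mpr hD11.le
    have := Real.rpow_le_rpow zero_le_one hinv hs0.le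
    simpa using this
  have hAX : D1 ^ (-1 / κ) * ((1 - ρ ^ 2 * (1 - D1)) / D2) ^ s
      = ((1 - ρ ^ 2 * (1 - D1)) / (D1 * D2)) ^ s := by
    rw [hA, ← Real.mul_rpow (by positivity) (div_nonneg hnum0.le hD20.le)]
    congr 1
    field_simp
  have hAY : D1 ^ (-1 / κ) * ((1 - ρ ^ 2) / D2) ^ s = u ^ s := by
    rw [hA, ← Real.mul_rpow (by positivity) (div_nonneg h1ρ2.le hD20.le), hu]
    congr 1
    field_simp
  have hAXle : ((1 - ρ ^ 2 * (1 - D1)) / (D1 * D2)) ^ s ≤ u ^ s * (1 + ρ ^ 2) ^ s := by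
    rw [← Real.mul_rpow hupos.le (by nlinarith)]
    apply Real.rpow_le_rpow (div_nonneg hnum0.le hDDpos.le) _ hs0.le
    have he : u * (1 + ρ ^ 2) = ((1 - ρ ^ 2) * (1 + ρ ^ 2)) / (D1 * D2) := by
      rw [hu]; ring
    rw [he]
    gcongr
    nlinarith [mul_le_mul_of_nonneg_left hD1le (sq_nonneg ρ)]
  have hPUQ' : (1 + ρ) ^ s ≤ u ^ s * (1 - ρ) ^ s := by
    have h := Real.rpow_le_rpow (by linarith : (0:ℝ) ≤ 1 + ρ) hu1ρ hs0.le
    rwa [Real.mul_rpow hupos.le (by linarith)] at h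
  have hU1' : 1 ≤ u ^ s := by
    have := Real.rpow_le_rpow zero_le_one hu1 hs0.le
    simpa using this
  have hK1' : 1 ≤ (1 + ρ ^ 2) ^ s := by
    have := Real.rpow_le_rpow zero_le_one (le_add_of_nonneg_right (sq_nonneg ρ)) hs0.le
    simpa using this
  -- abbreviations
  set U : ℝ := u ^ s with hU
  set P : ℝ := (1 + ρ) ^ s with hP
  set Q : ℝ := (1 - ρ) ^ s with hQ
  set K : ℝ := (1 + ρ ^ 2) ^ s with hK
  set A : ℝ := D1 ^ (-1 / κ) with hAdef
  set X : ℝ := ((1 - ρ ^ 2 * (1 - D1)) / D2) ^ s with hX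
  set Y : ℝ := ((1 - ρ ^ 2) / D2) ^ s with hY
  clear_value s u U P Q K A X Y
  have hP0 : 0 < P := by rw [hP]; exact Real.rpow_pos_of_pos (by linarith) s
  have hQ0 : 0 < Q := by rw [hQ]; exact Real.rpow_pos_of_pos (by linarith) s
  have hQP : Q < P := by
    rw [hP, hQ]; exact Real.rpow_lt_rpow (by linarith) (by linarith) hs0
  set C : ℝ := P * (K - 1) / (P - Q) with hC
  clear_value C
  have hC0 : 0 ≤ C := by
    rw [hC]; exact div_nonneg (mul_nonneg hP0.le (by linarith)) (by linarith)
  -- core inequality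
  have hcore : U * K - U ≤ C * (U - 1) := by
    rw [hC, div_mul_eq_mul_div, le_div_iff₀ (by linarith : (0:ℝ) < P - Q)]
    have key : 0 ≤ (K - 1) * (U * Q - P) :=
      mul_nonneg (by linarith) (sub_nonneg.2 hPUQ')
    have expand : P * (K - 1) * (U - 1) - (U * K - U) * (P - Q) = (K - 1) * (U * Q - P) := by
      ring
    linarith
  -- A * X ≤ U * K (combining)
  have hAXUK : A * X ≤ U * K := le_trans (le_of_eq hAX) hAXle
  set num : ℝ := N1 * (A - 1) + N2 * A * (X - 1) with hnum
  set den : ℝ := N1 * (A - 1) + N2 * A * (Y - 1) with hden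
  clear_value num den
  have hdenge : N2 * (U - 1) ≤ den := by
    have hden' : den = N1 * (A - 1) + N2 * (U - A) := by
      rw [hden, ← hAY]; ring
    rw [hden']
    linarith [mul_nonneg (sub_nonneg.2 hN) (sub_nonneg.2 hA1)]
  have hden0 : 0 ≤ den := le_trans (mul_nonneg hN2.le (by linarith)) hdenge
  rcases eq_or_lt_of_le hden0 with h0 | hpos
  · rw [← h0, div_zero]
    linarith
  · rw [div_le_iff₀ hpos]
    have h2 : N2 * (A * X - A * Y) ≤ C * den :=
      calc N2 * (A * X - A * Y) ≤ N2 * (C * (U - 1)) := by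
            apply mul_le_mul_of_nonneg_left _ hN2.le
            rw [hAY]
            linarith
        _ = C * (N2 * (U - 1)) := by ring
        _ ≤ C * den := mul_le_mul_of_nonneg_left hdenge hC0
    calc num = den + N2 * (A * X - A * Y) := by rw [hnum, hden]; ring
      _ ≤ den + C * den := by linarith
      _ = (1 + C) * den := by ring
end

section
/- Let ρ ∈ (0,1), κ > 0, N1 ≥ N2 > 0, and D1, D2 ∈ (0,1) with (1−D1)·(1−D2) ≥ ρ²; set δ := 1−D1. Define A := ((1−ρ²)/(D1·(1−ρ²) − ρ²·(1−√δ)²))^{1/κ}, P' := N1·(A − 1) + N2·(((1−ρ²)/D2)^{1/κ} − 1)·A, and P_outer := N1·(D1^{−1/κ} − 1) + N2·D1^{−1/κ}·(((1−ρ²)/D2)^{1/κ} − 1). Then P' / P_outer ≤ ((1+ρ)²/(1+2ρ))^{1/κ} + (((1+ρ)²/(1+2ρ))^{1/κ} − 1) / ((1−ρ²)^{−1/κ} − 1). -/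
/-- For `ρ ∈ (0,1)`, `κ > 0`, `N1 ≥ N2 > 0`, `D1, D2 ∈ (0,1)` with
`(1−D1)(1−D2) ≥ ρ²` and `δ := 1−D1`, with
`A := ((1−ρ²)/(D1(1−ρ²) − ρ²(1−√δ)²))^{1/κ}`,
`P' := N1(A − 1) + N2(((1−ρ²)/D2)^{1/κ} − 1)·A`, and
`P_outer := N1(D1^{−1/κ} − 1) + N2·D1^{−1/κ}·(((1−ρ²)/D2)^{1/κ} − 1)`, one has
`P'/P_outer ≤ ((1+ρ)²/(1+2ρ))^{1/κ} + (((1+ρ)²/(1+2ρ))^{1/κ} − 1)/((1−ρ²)^{−1/κ} − 1)`. -/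
theorem power_ratio_bound_second_half (ρ κ N1 N2 D1 D2 : ℝ)
    (hρ : ρ ∈ Set.Ioo (0 : ℝ) 1) (hκ : 0 < κ) (hN2 : 0 < N2) (hN : N2 ≤ N1)
    (hD1 : D1 ∈ Set.Ioo (0 : ℝ) 1) (hD2 : D2 ∈ Set.Ioo (0 : ℝ) 1)
    (hreg : (1 - D1) * (1 - D2) ≥ ρ ^ 2) :
    (N1 * (((1 - ρ ^ 2) /
          (D1 * (1 - ρ ^ 2) - ρ ^ 2 * (1 - Real.sqrt (1 - D1)) ^ 2)) ^ (1 / κ) - 1)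
        + N2 * (((1 - ρ ^ 2) / D2) ^ (1 / κ) - 1)
          * ((1 - ρ ^ 2) /
            (D1 * (1 - ρ ^ 2) - ρ ^ 2 * (1 - Real.sqrt (1 - D1)) ^ 2)) ^ (1 / κ)) /
      (N1 * (D1 ^ (-1 / κ) - 1)
        + N2 * D1 ^ (-1 / κ) * (((1 - ρ ^ 2) / D2) ^ (1 / κ) - 1))
      ≤ ((1 + ρ) ^ 2 / (1 + 2 * ρ)) ^ (1 / κ)
        + (((1 + ρ) ^ 2 / (1 + 2 * ρ)) ^ (1 / κ) - 1) /
            ((1 - ρ ^ 2) ^ (-1 / κ) - 1) := by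
  obtain ⟨hρ0, hρ1⟩ := hρ
  obtain ⟨hD10, hD11⟩ := hD1
  obtain ⟨hD20, hD21⟩ := hD2
  set s := Real.sqrt (1 - D1) with hs
  clear_value s
  have hs0 : 0 ≤ s := by rw [hs]; exact Real.sqrt_nonneg _
  have hs2 : s ^ 2 = 1 - D1 := by rw [hs]; exact Real.sq_sqrt (by linarith)
  have hs1 : s < 1 := by nlinarith [hs2, hs0]
  have hD1le : D1 ≤ 1 - ρ ^ 2 := by nlinarith
  have hD2le : D2 ≤ 1 - ρ ^ 2 := by nlinarith
  have hρs : ρ ≤ s := by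
    rw [hs, show ρ = Real.sqrt (ρ ^ 2) from (Real.sqrt_sq hρ0.le).symm]
    exact Real.sqrt_le_sqrt (by nlinarith)
  -- the denominator Q
  set Q := D1 * (1 - ρ ^ 2) - ρ ^ 2 * (1 - s) ^ 2 with hQdef
  clear_value Q
  have hQfac : Q = (1 - s) * (1 + s - 2 * ρ ^ 2) := by
    rw [hQdef]; nlinarith [hs2]
  have hQpos : 0 < Q := by
    rw [hQfac]
    have h1 : 0 < 1 - s := by linarith
    have h2 : 0 < 1 + s - 2 * ρ ^ 2 := by nlinarith
    positivity
  have hρ2 : (0:ℝ) < 1 - ρ ^ 2 := by nlinarith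
  have h2ρ : (0:ℝ) < 1 + 2 * ρ := by linarith
  -- key ratio inequality
  have hkey : (1 - ρ ^ 2) / Q ≤ (1 + ρ) ^ 2 / (1 + 2 * ρ) * D1⁻¹ := by
    rw [show (1 + ρ) ^ 2 / (1 + 2 * ρ) * D1⁻¹ = (1 + ρ) ^ 2 / ((1 + 2 * ρ) * D1) by
      field_simp]
    rw [div_le_div_iff₀ hQpos (by positivity)]
    have hexp : 0 ≤ ρ ^ 2 * (1 + ρ) * ((1 - s) * (s - ρ)) := by
      have := sq_nonneg ρ
      have h1 : (0:ℝ) ≤ 1 - s := by linarith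
      have h2 : (0:ℝ) ≤ s - ρ := by linarith
      positivity
    nlinarith [hexp, hs2, hQfac]
  -- abbreviations
  set B := ((1 - ρ ^ 2) / Q) ^ (1 / κ) with hBdef
  set C := ((1 - ρ ^ 2) / D2) ^ (1 / κ) with hCdef
  set E := D1 ^ (-1 / κ) with hEdef
  set R := ((1 + ρ) ^ 2 / (1 + 2 * ρ)) ^ (1 / κ) with hRdef
  set G := (1 - ρ ^ 2) ^ (-1 / κ) with hGdef
  clear_value B C E R G
  have hκ' : 0 ≤ 1 / κ := by positivity
  have hEeq : E = (D1⁻¹) ^ (1 / κ) := by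
    rw [hEdef, show (-1:ℝ)/κ = -(1/κ) by ring, Real.rpow_neg hD10.le,
      Real.inv_rpow hD10.le]
  have hBRE : B ≤ R * E := by
    rw [hBdef, hRdef, hEeq, ← Real.mul_rpow (by positivity) (by positivity)]
    exact Real.rpow_le_rpow (by positivity) hkey hκ'
  have hC1 : 1 ≤ C := by
    rw [hCdef]
    apply Real.one_le_rpow (by rw [le_div_iff₀ hD20]; linarith) hκ'
  have hEpos : 0 < E := by rw [hEdef]; positivity
  have hG1 : 1 < G := by
    rw [hGdef]
    have h1 : 1 - ρ ^ 2 < 1 := by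
      have : 0 < ρ ^ 2 := by positivity
      linarith
    have h2 : -1 / κ < 0 := div_neg_of_neg_of_pos (by norm_num) hκ
    exact (Real.one_lt_rpow_iff_of_pos hρ2).mpr (Or.inr ⟨h1, h2⟩)
  have hEG : G ≤ E := by
    rw [hGdef, hEdef, show (-1:ℝ)/κ = -(1/κ) by ring,
      Real.rpow_neg hρ2.le, Real.rpow_neg hD10.le]
    apply inv_anti₀ (by positivity)
    exact Real.rpow_le_rpow hD10.le hD1le hκ'
  have hR1 : 1 ≤ R := by
    rw [hRdef]
    apply Real.one_le_rpow _ hκ'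
    rw [le_div_iff₀ h2ρ]
    have h : (1 + ρ) ^ 2 = 1 + 2 * ρ + ρ ^ 2 := by ring
    have h2 : 0 ≤ ρ ^ 2 := sq_nonneg ρ
    linarith
  -- denominator S
  set S := N1 * (E - 1) + N2 * E * (C - 1) with hSdef
  clear_value S
  have hstep2 : N1 * (G - 1) ≤ S := by
    rw [hSdef]
    have h1 : N1 * (G - 1) ≤ N1 * (E - 1) :=
      mul_le_mul_of_nonneg_left (by linarith) (le_trans hN2.le hN)
    have h2 : 0 ≤ N2 * E * (C - 1) := by
      apply mul_nonneg (by positivity) (by linarith)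
    linarith
  have hSpos : 0 < S := by
    have h1 : 0 < N1 * (G - 1) := mul_pos (lt_of_lt_of_le hN2 hN) (by linarith)
    linarith
  have hstep1 : N1 * (B - 1) + N2 * (C - 1) * B ≤ R * S + N1 * (R - 1) := by
    have hcoef : 0 ≤ N1 + N2 * (C - 1) := by
      have h1 : 0 ≤ N2 * (C - 1) := mul_nonneg hN2.le (by linarith)
      linarith
    have key : (N1 + N2 * (C - 1)) * B ≤ (N1 + N2 * (C - 1)) * (R * E) :=
      mul_le_mul_of_nonneg_left hBRE hcoef
    rw [hSdef]; linarith [key]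
  have hG1pos : (0:ℝ) < G - 1 := by linarith
  have hGne : G - 1 ≠ 0 := ne_of_gt hG1pos
  rw [show R + (R - 1) / (G - 1) = (R * (G - 1) + (R - 1)) / (G - 1) by
    field_simp]
  rw [div_le_div_iff₀ hSpos hG1pos]
  have h1 := mul_le_mul_of_nonneg_right hstep1 hG1pos.le
  have h2 : 0 ≤ (R - 1) * (S - N1 * (G - 1)) :=
    mul_nonneg (by linarith) (by linarith)
  linarith [h1, h2]
end

section
/- Fix ρ ∈ (0,1), κ > 0, N1 ≥ N2 > 0, and set D1 := 1−ρ², δ := ρ². For D2 ∈ (0,1) define P_C(D2) := N1·(D1^{−1/κ} − 1) + N2·D1^{−1/κ}·(((1−ρ²δ)/D2)^{1/κ} − 1), A(ν) := ((1−ρ²)/(D1·(1−ν²δ) − (ρ−νδ)²))^{1/κ}, P(ν) := N1·(A(ν) − 1) + N2·(((1−ν²δ)/D2)^{1/κ} − 1)·A(ν), and P_sep(D2) := inf{ P(ν) : ν ∈ [ρ, min(1/ρ, ρ/δ, √((1−D2)/δ))] }. Then P_C(D2)/P_sep(D2) tends to (1+ρ²)^{1/κ} as D2 → 0 from the right. 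-/
open Filter Real Set

set_option maxHeartbeats 1000000

lemma aux_lb (ρ κ N1 N2 D2 ν : ℝ) (hρ0 : 0 < ρ) (hρ1 : ρ < 1) (hκ : 0 < κ)
    (hN2 : 0 < N2) (hN : N2 ≤ N1) (hD2 : 0 < D2) (hD21 : D2 < 1)
    (hν : ν ∈ Set.Icc ρ (min (1 / ρ)
      (min (ρ / ρ ^ 2) (Real.sqrt ((1 - D2) / ρ ^ 2))))) :
    N2 / D2 ^ (1/κ) - N2 ≤
      N1 * (((1 - ρ ^ 2) /
          ((1 - ρ ^ 2) * (1 - ν ^ 2 * ρ ^ 2) - (ρ - ν * ρ ^ 2) ^ 2)) ^ (1 / κ) - 1)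
      + N2 * (((1 - ν ^ 2 * ρ ^ 2) / D2) ^ (1 / κ) - 1)
        * ((1 - ρ ^ 2) /
          ((1 - ρ ^ 2) * (1 - ν ^ 2 * ρ ^ 2) - (ρ - ν * ρ ^ 2) ^ 2)) ^ (1 / κ) := by
  have hr0 : 0 < 1/κ := by positivity
  have hν0 : 0 < ν := lt_of_lt_of_le hρ0 hν.1
  have hν2 : ν ≤ Real.sqrt ((1 - D2) / ρ ^ 2) :=
    hν.2.trans ((min_le_right _ _).trans (min_le_right _ _))
  have hy0 : (0:ℝ) ≤ (1 - D2) / ρ ^ 2 := div_nonneg (by linarith) (by positivity)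
  have hsq : ν ^ 2 ≤ (1 - D2) / ρ ^ 2 := (Real.le_sqrt hν0.le hy0).mp hν2
  have hsq' : ν ^ 2 * ρ ^ 2 ≤ 1 - D2 := (le_div_iff₀ (by positivity)).mp hsq
  have hB : D2 ≤ 1 - ν ^ 2 * ρ ^ 2 := by linarith
  have hB0 : (0:ℝ) ≤ 1 - ν ^ 2 * ρ ^ 2 := by linarith
  have hνρ : ν * ρ < 1 := by nlinarith [mul_pos hν0 hρ0]
  have h1 : 0 < 1 - ν * ρ := by linarith
  have h2 : 0 < 1 + ν * ρ - 2 * ρ ^ 2 := by nlinarith [hν.1]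
  have hf : 0 < (1 - ρ ^ 2) * (1 - ν ^ 2 * ρ ^ 2) - (ρ - ν * ρ ^ 2) ^ 2 := by
    nlinarith [mul_pos h1 h2]
  set F := (1 - ρ ^ 2) * (1 - ν ^ 2 * ρ ^ 2) - (ρ - ν * ρ ^ 2) ^ 2 with hFdef
  have hfle : F ≤ 1 - ρ ^ 2 := by
    rw [hFdef]
    nlinarith [mul_nonneg (sq_nonneg ρ) (sq_nonneg (ν - ρ)), sq_nonneg ρ,
      mul_pos (mul_pos hρ0 hρ0) (show (0:ℝ) < 1 - ρ^2 by nlinarith)]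
  have hX1 : 1 ≤ (1 - ρ ^ 2) / F := (one_le_div hf).mpr hfle
  have hA1 : 1 ≤ ((1 - ρ ^ 2) / F) ^ (1/κ) := Real.one_le_rpow hX1 hr0.le
  have hBdf : F ≤ (1 - ν ^ 2 * ρ ^ 2) * ((1 - ρ ^ 2)) := by
    rw [hFdef]; nlinarith [sq_nonneg (ρ - ν * ρ ^ 2)]
  have hBX : 1 ≤ (1 - ν ^ 2 * ρ ^ 2) * ((1 - ρ ^ 2) / F) := by
    rw [mul_div_assoc']
    exact (one_le_div hf).mpr hBdf
  have hBA : 1 ≤ (1 - ν ^ 2 * ρ ^ 2) ^ (1/κ) * ((1 - ρ ^ 2) / F) ^ (1/κ) := by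
    rw [← Real.mul_rpow hB0 (by positivity)]
    exact Real.one_le_rpow hBX hr0.le
  have hdiv : ((1 - ν ^ 2 * ρ ^ 2) / D2) ^ (1/κ)
      = (1 - ν ^ 2 * ρ ^ 2) ^ (1/κ) / D2 ^ (1/κ) := Real.div_rpow hB0 hD2.le _
  have hD2r : 0 < D2 ^ (1/κ) := Real.rpow_pos_of_pos hD2 _
  set A := ((1 - ρ ^ 2) / F) ^ (1/κ) with hA
  set Br := (1 - ν ^ 2 * ρ ^ 2) ^ (1/κ) with hBr
  have key1 : N2 / D2 ^ (1/κ) ≤ N2 * (Br * A) / D2 ^ (1/κ) := by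
    gcongr
    exact le_mul_of_one_le_right hN2.le hBA
  have key2 : N2 * (Br / D2 ^ (1/κ) - 1) * A = N2 * (Br * A) / D2 ^ (1/κ) - N2 * A := by
    field_simp
  have key3 : 0 ≤ (N1 - N2) * (A - 1) := mul_nonneg (by linarith) (by linarith)
  rw [hdiv, key2]
  nlinarith [key1, key3]
lemma aux_mem (ρ D2 : ℝ) (hρ0 : 0 < ρ) (hρ1 : ρ < 1) (hD2 : 0 < D2) (hD21 : D2 < 1)
    (hD2ρ : D2 < (1 - ρ ^ 2) ^ 2) :
    (1 - Real.sqrt D2) / ρ ∈ Set.Icc ρ (min (1 / ρ)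
      (min (ρ / ρ ^ 2) (Real.sqrt ((1 - D2) / ρ ^ 2)))) := by
  have hd : 0 < 1 - ρ ^ 2 := by nlinarith
  have hs0 : 0 < Real.sqrt D2 := Real.sqrt_pos.mpr hD2
  have hs1 : Real.sqrt D2 < 1 - ρ ^ 2 := by
    have h := Real.sqrt_lt_sqrt hD2.le hD2ρ
    rwa [Real.sqrt_sq hd.le] at h
  have hsD : D2 ≤ Real.sqrt D2 := (Real.le_sqrt hD2.le hD2.le).mpr (by nlinarith)
  have hsq2 : Real.sqrt D2 ^ 2 = D2 := Real.sq_sqrt hD2.le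
  have hnum : 0 < 1 - Real.sqrt D2 := by nlinarith
  have hle1 : (1 - Real.sqrt D2) / ρ ≤ 1 / ρ := by gcongr; linarith
  constructor
  · rw [le_div_iff₀ hρ0]; nlinarith
  · refine le_min hle1 (le_min ?_ ?_)
    · have : ρ / ρ ^ 2 = 1 / ρ := by rw [pow_two]; field_simp
      rw [this]; exact hle1
    · rw [Real.le_sqrt (by positivity) (div_nonneg (by linarith) (by positivity))]
      rw [div_pow, div_le_div_iff₀ (by positivity) (by positivity)]
      nlinarith
lemma aux_F (ρ κ N1 N2 : ℝ) (hρ0 : 0 < ρ) (hρ1 : ρ < 1) (hκ : 0 < κ) :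
    Filter.Tendsto (fun ε : ℝ =>
      (N1 * (((1 - ρ ^ 2) /
          ((1 - ρ ^ 2) * (1 - ((1 - ε) / ρ) ^ 2 * ρ ^ 2)
            - (ρ - (1 - ε) / ρ * ρ ^ 2) ^ 2)) ^ (1 / κ) - 1)
        + N2 * (((1 - ((1 - ε) / ρ) ^ 2 * ρ ^ 2) / ε ^ 2) ^ (1 / κ) - 1)
          * ((1 - ρ ^ 2) /
            ((1 - ρ ^ 2) * (1 - ((1 - ε) / ρ) ^ 2 * ρ ^ 2)
              - (ρ - (1 - ε) / ρ * ρ ^ 2) ^ 2)) ^ (1 / κ)) * (ε ^ 2) ^ (1 / κ))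
      (nhdsWithin 0 (Set.Ioi 0)) (nhds N2) := by
  have hd : 0 < 1 - ρ ^ 2 := by nlinarith
  have hr0 : 0 < 1/κ := by positivity
  -- the simplified function W
  set W : ℝ → ℝ := fun ε =>
    N1 * ((1 - ρ ^ 2) * ε / (2 - 2 * ρ ^ 2 - ε)) ^ (1/κ) - N1 * (ε ^ 2) ^ (1/κ)
    + N2 * ((2 - ε) * (1 - ρ ^ 2) / (2 - 2 * ρ ^ 2 - ε)) ^ (1/κ)
    - N2 * ((1 - ρ ^ 2) * ε / (2 - 2 * ρ ^ 2 - ε)) ^ (1/κ) with hW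
  have hWlim : Filter.Tendsto W (nhds 0) (nhds N2) := by
    have hrpow0 : Filter.Tendsto (fun x : ℝ => x ^ (1/κ)) (nhds 0) (nhds 0) := by
      have := (Real.continuousAt_rpow_const 0 (1/κ) (Or.inr hr0.le)).tendsto
      simpa [Real.zero_rpow (inv_ne_zero hκ.ne')] using this
    have hrpow1 : Filter.Tendsto (fun x : ℝ => x ^ (1/κ)) (nhds 1) (nhds 1) := by
      have := (Real.continuousAt_rpow_const 1 (1/κ) (Or.inl one_ne_zero)).tendsto
      simpa [Real.one_rpow] using this
    have hden : (2 : ℝ) - 2 * ρ ^ 2 - 0 ≠ 0 := by nlinarith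
    have t1 : Filter.Tendsto (fun ε : ℝ => (1 - ρ ^ 2) * ε / (2 - 2 * ρ ^ 2 - ε))
        (nhds 0) (nhds 0) := by
      have : Filter.Tendsto (fun ε : ℝ => (1 - ρ ^ 2) * ε / (2 - 2 * ρ ^ 2 - ε))
          (nhds 0) (nhds ((1 - ρ ^ 2) * 0 / (2 - 2 * ρ ^ 2 - 0))) :=
        ((continuousAt_const.mul continuousAt_id).div
          (continuousAt_const.sub continuousAt_id) hden)
      simpa using this
    have T1 : Filter.Tendsto (fun ε : ℝ => ((1 - ρ ^ 2) * ε / (2 - 2 * ρ ^ 2 - ε)) ^ (1/κ))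
        (nhds 0) (nhds 0) := hrpow0.comp t1
    have t2 : Filter.Tendsto (fun ε : ℝ => ε ^ 2) (nhds (0:ℝ)) (nhds 0) := by
      have := (continuous_pow 2).tendsto (0:ℝ)
      simpa using this
    have T2 : Filter.Tendsto (fun ε : ℝ => (ε ^ 2) ^ (1/κ)) (nhds (0:ℝ)) (nhds 0) :=
      hrpow0.comp t2
    have t3 : Filter.Tendsto (fun ε : ℝ => (2 - ε) * (1 - ρ ^ 2) / (2 - 2 * ρ ^ 2 - ε))
        (nhds 0) (nhds 1) := by
      have h : Filter.Tendsto (fun ε : ℝ => (2 - ε) * (1 - ρ ^ 2) / (2 - 2 * ρ ^ 2 - ε))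
          (nhds 0) (nhds ((2 - 0) * (1 - ρ ^ 2) / (2 - 2 * ρ ^ 2 - 0))) :=
        ((continuousAt_const.sub continuousAt_id).mul continuousAt_const).div
          (continuousAt_const.sub continuousAt_id) hden
      have : (2 - (0:ℝ)) * (1 - ρ ^ 2) / (2 - 2 * ρ ^ 2 - 0) = 1 := by
        rw [div_eq_one_iff_eq (by nlinarith)]; ring
      rwa [this] at h
    have T3 : Filter.Tendsto (fun ε : ℝ => ((2 - ε) * (1 - ρ ^ 2) / (2 - 2 * ρ ^ 2 - ε)) ^ (1/κ))
        (nhds 0) (nhds 1) := hrpow1.comp t3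
    have hcomb := (((T1.const_mul N1).sub (T2.const_mul N1)).add (T3.const_mul N2)).sub
      (T1.const_mul N2)
    have hval : N1 * (0:ℝ) - N1 * 0 + N2 * 1 - N2 * 0 = N2 := by ring
    rw [hW]
    rw [hval] at hcomb
    exact hcomb
  apply Filter.Tendsto.congr' _ (hWlim.mono_left nhdsWithin_le_nhds)
  have hmem : Set.Ioo (0:ℝ) (min 1 (2 - 2 * ρ ^ 2)) ∈ nhdsWithin (0:ℝ) (Set.Ioi 0) :=
    Ioo_mem_nhdsGT_of_mem ⟨le_refl 0, lt_min one_pos (by nlinarith)⟩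
  filter_upwards [hmem] with ε hε
  obtain ⟨hε0, hεm⟩ := hε
  have hε1 : ε < 1 := lt_of_lt_of_le hεm (min_le_left _ _)
  have hεc : ε < 2 - 2 * ρ ^ 2 := lt_of_lt_of_le hεm (min_le_right _ _)
  have hc : 0 < 2 - 2 * ρ ^ 2 - ε := by linarith
  have hρ0' : ρ ≠ 0 := hρ0.ne'
  have e1 : 1 - ((1 - ε) / ρ) ^ 2 * ρ ^ 2 = ε * (2 - ε) := by field_simp; ring
  have e2 : (1 - ρ ^ 2) * (1 - ((1 - ε) / ρ) ^ 2 * ρ ^ 2)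
      - (ρ - (1 - ε) / ρ * ρ ^ 2) ^ 2 = ε * (2 - 2 * ρ ^ 2 - ε) := by field_simp; ring
  rw [hW]
  simp only
  rw [e2, e1]
  have q1 : ((1 - ρ ^ 2) / (ε * (2 - 2 * ρ ^ 2 - ε))) ^ (1/κ) * (ε ^ 2) ^ (1/κ)
      = ((1 - ρ ^ 2) * ε / (2 - 2 * ρ ^ 2 - ε)) ^ (1/κ) := by
    rw [← Real.mul_rpow (by positivity) (by positivity)]
    congr 1
    field_simp
  have q2 : (ε * (2 - ε) / ε ^ 2) ^ (1/κ) = ((2 - ε) / ε) ^ (1/κ) := by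
    congr 1
    field_simp
  have q3 : ((2 - ε) / ε) ^ (1/κ) * (((1 - ρ ^ 2) / (ε * (2 - 2 * ρ ^ 2 - ε))) ^ (1/κ)
      * (ε ^ 2) ^ (1/κ)) = ((2 - ε) * (1 - ρ ^ 2) / (2 - 2 * ρ ^ 2 - ε)) ^ (1/κ) := by
    rw [q1, ← Real.mul_rpow (div_nonneg (by linarith) hε0.le)
      (div_nonneg (mul_nonneg hd.le hε0.le) hc.le)]
    congr 1
    field_simp
  rw [q2]
  linear_combination (N2 - N1) * q1 - N2 * q3
lemma aux_num (ρ κ N1 N2 : ℝ) (hρ0 : 0 < ρ) (hρ1 : ρ < 1) (hκ : 0 < κ) :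
    Filter.Tendsto (fun D2 : ℝ =>
      (N1 * ((1 - ρ ^ 2) ^ (-1 / κ) - 1)
        + N2 * (1 - ρ ^ 2) ^ (-1 / κ)
          * (((1 - ρ ^ 2 * ρ ^ 2) / D2) ^ (1 / κ) - 1)) * D2 ^ (1 / κ))
      (nhdsWithin 0 (Set.Ioi 0)) (nhds (N2 * (1 + ρ ^ 2) ^ (1 / κ))) := by
  have hd : 0 < 1 - ρ ^ 2 := by nlinarith
  have hq : 0 < 1 - ρ ^ 2 * ρ ^ 2 := by nlinarith
  have hr0 : 0 < 1/κ := by positivity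
  have hrpow0 : Filter.Tendsto (fun x : ℝ => x ^ (1/κ)) (nhds 0) (nhds 0) := by
    have := (Real.continuousAt_rpow_const 0 (1/κ) (Or.inr hr0.le)).tendsto
    simpa [Real.zero_rpow (inv_ne_zero hκ.ne')] using this
  have hD2r : Filter.Tendsto (fun D2 : ℝ => D2 ^ (1/κ)) (nhdsWithin 0 (Set.Ioi 0)) (nhds 0) :=
    hrpow0.mono_left nhdsWithin_le_nhds
  have hV : Filter.Tendsto (fun D2 : ℝ =>
      N1 * ((1 - ρ ^ 2) ^ (-1/κ) - 1) * D2 ^ (1/κ)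
      + N2 * (1 - ρ ^ 2) ^ (-1/κ) * (1 - ρ ^ 2 * ρ ^ 2) ^ (1/κ)
      - N2 * (1 - ρ ^ 2) ^ (-1/κ) * D2 ^ (1/κ))
      (nhdsWithin 0 (Set.Ioi 0)) (nhds (N2 * (1 - ρ ^ 2) ^ (-1/κ) * (1 - ρ ^ 2 * ρ ^ 2) ^ (1/κ))) := by
    have := ((hD2r.const_mul (N1 * ((1 - ρ ^ 2) ^ (-1/κ) - 1))).add
      (tendsto_const_nhds (x := N2 * (1 - ρ ^ 2) ^ (-1/κ) * (1 - ρ ^ 2 * ρ ^ 2) ^ (1/κ)))).sub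
      (hD2r.const_mul (N2 * (1 - ρ ^ 2) ^ (-1/κ)))
    have hval : N1 * ((1 - ρ ^ 2) ^ (-1/κ) - 1) * 0
        + N2 * (1 - ρ ^ 2) ^ (-1/κ) * (1 - ρ ^ 2 * ρ ^ 2) ^ (1/κ)
        - N2 * (1 - ρ ^ 2) ^ (-1/κ) * 0
        = N2 * (1 - ρ ^ 2) ^ (-1/κ) * (1 - ρ ^ 2 * ρ ^ 2) ^ (1/κ) := by ring
    rw [hval] at this
    exact this
  have hval2 : N2 * (1 - ρ ^ 2) ^ (-1/κ) * (1 - ρ ^ 2 * ρ ^ 2) ^ (1/κ)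
      = N2 * (1 + ρ ^ 2) ^ (1/κ) := by
    have h4 : (1 - ρ ^ 2 * ρ ^ 2 : ℝ) = (1 - ρ ^ 2) * (1 + ρ ^ 2) := by ring
    rw [h4, Real.mul_rpow hd.le (by positivity)]
    have h5 : (1 - ρ ^ 2) ^ (-1/κ) * (1 - ρ ^ 2) ^ (1/κ) = 1 := by
      rw [← Real.rpow_add hd, show (-1/κ + 1/κ : ℝ) = 0 by ring, Real.rpow_zero]
    calc N2 * (1 - ρ ^ 2) ^ (-1/κ) * ((1 - ρ ^ 2) ^ (1/κ) * (1 + ρ ^ 2) ^ (1/κ))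
        = N2 * ((1 - ρ ^ 2) ^ (-1/κ) * (1 - ρ ^ 2) ^ (1/κ)) * (1 + ρ ^ 2) ^ (1/κ) := by ring
      _ = N2 * (1 + ρ ^ 2) ^ (1/κ) := by rw [h5]; ring
  rw [← hval2]
  apply Filter.Tendsto.congr' _ hV
  filter_upwards [self_mem_nhdsWithin] with D2 hD2
  have hD2' : (0:ℝ) < D2 := hD2
  have hD2rpos : (0:ℝ) < D2 ^ (1/κ) := Real.rpow_pos_of_pos hD2' _
  rw [Real.div_rpow hq.le hD2'.le]
  field_simp
  ring


/-- Fix `ρ ∈ (0,1)`, `κ > 0`, `N1 ≥ N2 > 0`, and set `D1 := 1−ρ²`,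
`δ := ρ²`. With `P_C(D2) := N1(D1^{−1/κ} − 1) + N2·D1^{−1/κ}·(((1−ρ²δ)/D2)^{1/κ} − 1)`,
`A(ν) := ((1−ρ²)/(D1(1−ν²δ) − (ρ−νδ)²))^{1/κ}`,
`P(ν) := N1(A(ν)−1) + N2(((1−ν²δ)/D2)^{1/κ} − 1)·A(ν)` and
`P_sep(D2) := inf{P(ν) : ν ∈ [ρ, min(1/ρ, ρ/δ, √((1−D2)/δ))]}`, the ratio
`P_C(D2)/P_sep(D2) → (1+ρ²)^{1/κ}` as `D2 → 0⁺`. -/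
theorem scheme_C_ratio_limit (ρ κ N1 N2 : ℝ)
    (hρ : ρ ∈ Set.Ioo (0 : ℝ) 1) (hκ : 0 < κ) (hN2 : 0 < N2) (hN : N2 ≤ N1) :
    Filter.Tendsto (fun D2 : ℝ =>
        (N1 * ((1 - ρ ^ 2) ^ (-1 / κ) - 1)
          + N2 * (1 - ρ ^ 2) ^ (-1 / κ)
            * (((1 - ρ ^ 2 * ρ ^ 2) / D2) ^ (1 / κ) - 1)) /
        sInf ((fun ν : ℝ =>
            N1 * (((1 - ρ ^ 2) /
                ((1 - ρ ^ 2) * (1 - ν ^ 2 * ρ ^ 2) - (ρ - ν * ρ ^ 2) ^ 2)) ^ (1 / κ) - 1)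
            + N2 * (((1 - ν ^ 2 * ρ ^ 2) / D2) ^ (1 / κ) - 1)
              * ((1 - ρ ^ 2) /
                ((1 - ρ ^ 2) * (1 - ν ^ 2 * ρ ^ 2) - (ρ - ν * ρ ^ 2) ^ 2)) ^ (1 / κ)) ''
          Set.Icc ρ (min (1 / ρ)
            (min (ρ / ρ ^ 2) (Real.sqrt ((1 - D2) / ρ ^ 2))))))
      (nhdsWithin 0 (Set.Ioi 0)) (nhds ((1 + ρ ^ 2) ^ (1 / κ))) := by
  obtain ⟨hρ0, hρ1⟩ := hρ
  have hd : 0 < 1 - ρ ^ 2 := by nlinarith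
  have hr0 : 0 < 1/κ := by positivity
  -- the inf function
  set G : ℝ → ℝ := fun D2 => sInf ((fun ν : ℝ =>
      N1 * (((1 - ρ ^ 2) /
          ((1 - ρ ^ 2) * (1 - ν ^ 2 * ρ ^ 2) - (ρ - ν * ρ ^ 2) ^ 2)) ^ (1 / κ) - 1)
      + N2 * (((1 - ν ^ 2 * ρ ^ 2) / D2) ^ (1 / κ) - 1)
        * ((1 - ρ ^ 2) /
          ((1 - ρ ^ 2) * (1 - ν ^ 2 * ρ ^ 2) - (ρ - ν * ρ ^ 2) ^ 2)) ^ (1 / κ)) ''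
    Set.Icc ρ (min (1 / ρ)
      (min (ρ / ρ ^ 2) (Real.sqrt ((1 - D2) / ρ ^ 2))))) with hG
  have hδ0 : 0 < min 1 ((1 - ρ ^ 2) ^ 2) := lt_min one_pos (by positivity)
  have hev : Set.Ioo (0:ℝ) (min 1 ((1 - ρ ^ 2) ^ 2)) ∈ nhdsWithin (0:ℝ) (Set.Ioi 0) :=
    Ioo_mem_nhdsGT_of_mem ⟨le_refl 0, hδ0⟩
  have hsqrt : Filter.Tendsto Real.sqrt (nhdsWithin (0:ℝ) (Set.Ioi 0))
      (nhdsWithin (0:ℝ) (Set.Ioi 0)) := by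
    refine tendsto_nhdsWithin_iff.mpr ⟨?_, ?_⟩
    · exact (Real.continuous_sqrt.tendsto' 0 0 Real.sqrt_zero).mono_left nhdsWithin_le_nhds
    · filter_upwards [self_mem_nhdsWithin] with x hx
      exact Real.sqrt_pos.mpr hx
  -- squeeze: G D2 * D2^(1/κ) → N2
  have hGmul : Filter.Tendsto (fun D2 : ℝ => G D2 * D2 ^ (1/κ))
      (nhdsWithin 0 (Set.Ioi 0)) (nhds N2) := by
    apply tendsto_of_tendsto_of_tendsto_of_le_of_le'
      (g := fun D2 : ℝ => N2 - N2 * D2 ^ (1/κ))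
      (h := fun D2 : ℝ =>
        (N1 * (((1 - ρ ^ 2) /
            ((1 - ρ ^ 2) * (1 - ((1 - Real.sqrt D2) / ρ) ^ 2 * ρ ^ 2)
              - (ρ - (1 - Real.sqrt D2) / ρ * ρ ^ 2) ^ 2)) ^ (1 / κ) - 1)
          + N2 * (((1 - ((1 - Real.sqrt D2) / ρ) ^ 2 * ρ ^ 2) / D2) ^ (1 / κ) - 1)
            * ((1 - ρ ^ 2) /
              ((1 - ρ ^ 2) * (1 - ((1 - Real.sqrt D2) / ρ) ^ 2 * ρ ^ 2)
                - (ρ - (1 - Real.sqrt D2) / ρ * ρ ^ 2) ^ 2)) ^ (1 / κ)) * D2 ^ (1/κ))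
    · -- lower bound tendsto
      have hrpow0 : Filter.Tendsto (fun x : ℝ => x ^ (1/κ)) (nhds 0) (nhds 0) := by
        have := (Real.continuousAt_rpow_const 0 (1/κ) (Or.inr hr0.le)).tendsto
        simpa [Real.zero_rpow (inv_ne_zero hκ.ne')] using this
      have hD2r : Filter.Tendsto (fun D2 : ℝ => D2 ^ (1/κ))
          (nhdsWithin 0 (Set.Ioi 0)) (nhds 0) := hrpow0.mono_left nhdsWithin_le_nhds
      have := (tendsto_const_nhds (x := N2)
        (f := nhdsWithin (0:ℝ) (Set.Ioi 0))).sub (hD2r.const_mul N2)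
      simpa using this
    · -- upper bound tendsto via aux_F
      have hcomp := (aux_F ρ κ N1 N2 hρ0 hρ1 hκ).comp hsqrt
      apply hcomp.congr'
      filter_upwards [self_mem_nhdsWithin] with D2 hD2
      have hD2' : (0:ℝ) < D2 := hD2
      simp only [Function.comp_apply]
      rw [Real.sq_sqrt hD2'.le]
    · -- lower inequality
      filter_upwards [hev] with D2 hD2
      obtain ⟨hD2pos, hD2m⟩ := hD2
      have hD21 : D2 < 1 := lt_of_lt_of_le hD2m (min_le_left _ _)
      have hD2ρ : D2 < (1 - ρ ^ 2) ^ 2 := lt_of_lt_of_le hD2m (min_le_right _ _)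
      have hD2rpos : (0:ℝ) < D2 ^ (1/κ) := Real.rpow_pos_of_pos hD2pos _
      have hmemν := aux_mem ρ D2 hρ0 hρ1 hD2pos hD21 hD2ρ
      have h1 : N2 / D2 ^ (1/κ) - N2 ≤ G D2 := by
        rw [hG]
        refine le_csInf ⟨_, Set.mem_image_of_mem _ hmemν⟩ ?_
        rintro y ⟨ν, hν, rfl⟩
        exact aux_lb ρ κ N1 N2 D2 ν hρ0 hρ1 hκ hN2 hN hD2pos hD21 hν
      calc N2 - N2 * D2 ^ (1/κ) = (N2 / D2 ^ (1/κ) - N2) * D2 ^ (1/κ) := by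
            rw [sub_mul, div_mul_cancel₀ _ (ne_of_gt hD2rpos)]
        _ ≤ G D2 * D2 ^ (1/κ) := mul_le_mul_of_nonneg_right h1 hD2rpos.le
    · -- upper inequality
      filter_upwards [hev] with D2 hD2
      obtain ⟨hD2pos, hD2m⟩ := hD2
      have hD21 : D2 < 1 := lt_of_lt_of_le hD2m (min_le_left _ _)
      have hD2ρ : D2 < (1 - ρ ^ 2) ^ 2 := lt_of_lt_of_le hD2m (min_le_right _ _)
      have hD2rpos : (0:ℝ) < D2 ^ (1/κ) := Real.rpow_pos_of_pos hD2pos _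
      have hmemν := aux_mem ρ D2 hρ0 hρ1 hD2pos hD21 hD2ρ
      have h2 : G D2 ≤ N1 * (((1 - ρ ^ 2) /
            ((1 - ρ ^ 2) * (1 - ((1 - Real.sqrt D2) / ρ) ^ 2 * ρ ^ 2)
              - (ρ - (1 - Real.sqrt D2) / ρ * ρ ^ 2) ^ 2)) ^ (1 / κ) - 1)
          + N2 * (((1 - ((1 - Real.sqrt D2) / ρ) ^ 2 * ρ ^ 2) / D2) ^ (1 / κ) - 1)
            * ((1 - ρ ^ 2) /
              ((1 - ρ ^ 2) * (1 - ((1 - Real.sqrt D2) / ρ) ^ 2 * ρ ^ 2)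
                - (ρ - (1 - Real.sqrt D2) / ρ * ρ ^ 2) ^ 2)) ^ (1 / κ) := by
        rw [hG]
        refine csInf_le ⟨N2 / D2 ^ (1/κ) - N2, ?_⟩ (Set.mem_image_of_mem _ hmemν)
        rintro y ⟨ν, hν, rfl⟩
        exact aux_lb ρ κ N1 N2 D2 ν hρ0 hρ1 hκ hN2 hN hD2pos hD21 hν
      exact mul_le_mul_of_nonneg_right h2 hD2rpos.le
  -- final division
  have hNum := aux_num ρ κ N1 N2 hρ0 hρ1 hκ
  have hfinal := hNum.div hGmul hN2.ne'
  have hvv : N2 * (1 + ρ ^ 2) ^ (1/κ) / N2 = (1 + ρ ^ 2) ^ (1/κ) := by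
    rw [mul_comm, mul_div_assoc, div_self hN2.ne', mul_one]
  rw [hvv] at hfinal
  apply hfinal.congr'
  filter_upwards [self_mem_nhdsWithin] with D2 hD2
  have hD2rpos : (0:ℝ) < D2 ^ (1/κ) := Real.rpow_pos_of_pos hD2 _
  exact mul_div_mul_right _ _ (ne_of_gt hD2rpos)
end

section
/- Let ρ ∈ (0,1) and δ ∈ (0,1) with δ < ρ². Then the quadratic q(ν) := −ρ·(1−ρ²) − ρδ + 2νδ − ν²ρδ satisfies q(ν) ≤ −(1−ρ²)·(ρ − δ/ρ) < 0 for all ν ∈ ℝ, with equality exactly at ν = 1/ρ; moreover the denominator g(ν) := 1 − ρ² − δ·(1 − 2νρ + ν²) is strictly positive for all ν ∈ [ρ, 1/ρ], and the function h(ν) := (1 − νρ)/g(ν) is strictly decreasing on the interval [ρ, 1/ρ]. -/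

private lemma gpos_aux (ρ δ ν : ℝ) (hρ0 : 0 < ρ) (hρ1 : ρ < 1) (hδ0 : 0 < δ)
    (h : δ < ρ ^ 2) (h1 : ρ ≤ ν) (hνρ : ν * ρ ≤ 1) :
    0 < 1 - ρ ^ 2 - δ * (1 - 2 * ν * ρ + ν ^ 2) := by
  have e1 : 0 ≤ 1 - ν * ρ := by linarith
  have e2 : 0 ≤ 1 + ν * ρ - 2 * ρ ^ 2 := by nlinarith
  nlinarith [mul_nonneg hδ0.le (mul_nonneg e1 e2),
    mul_pos (show (0:ℝ) < 1 - ρ ^ 2 by nlinarith) (show (0:ℝ) < ρ ^ 2 - δ by linarith),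
    mul_pos hρ0 hρ0, sq_nonneg (ν - ρ)]

/-- For `ρ ∈ (0,1)` and `δ ∈ (0,1)` with `δ < ρ²`, the quadratic
`q(ν) = −ρ(1−ρ²) − ρδ + 2νδ − ν²ρδ` satisfies `q(ν) ≤ −(1−ρ²)(ρ − δ/ρ) < 0` for all
`ν`, with equality exactly at `ν = 1/ρ`; moreover `g(ν) = 1 − ρ² − δ(1 − 2νρ + ν²)` is
strictly positive on `[ρ, 1/ρ]`, and `h(ν) = (1 − νρ)/g(ν)` is strictly decreasing
on `[ρ, 1/ρ]`. -/
theorem monotonicity_case_delta_lt_rho_sq (ρ δ : ℝ)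
    (hρ : ρ ∈ Set.Ioo (0 : ℝ) 1) (hδ : δ ∈ Set.Ioo (0 : ℝ) 1) (h : δ < ρ ^ 2) :
    (∀ ν : ℝ, -ρ * (1 - ρ ^ 2) - ρ * δ + 2 * ν * δ - ν ^ 2 * ρ * δ
      ≤ -(1 - ρ ^ 2) * (ρ - δ / ρ)) ∧
    -(1 - ρ ^ 2) * (ρ - δ / ρ) < 0 ∧
    (∀ ν : ℝ, -ρ * (1 - ρ ^ 2) - ρ * δ + 2 * ν * δ - ν ^ 2 * ρ * δ
      = -(1 - ρ ^ 2) * (ρ - δ / ρ) ↔ ν = 1 / ρ) ∧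
    (∀ ν ∈ Set.Icc ρ (1 / ρ), 0 < 1 - ρ ^ 2 - δ * (1 - 2 * ν * ρ + ν ^ 2)) ∧
    StrictAntiOn (fun ν : ℝ => (1 - ν * ρ) / (1 - ρ ^ 2 - δ * (1 - 2 * ν * ρ + ν ^ 2)))
      (Set.Icc ρ (1 / ρ)) := by
  obtain ⟨hρ0, hρ1⟩ := hρ
  obtain ⟨hδ0, hδ1⟩ := hδ
  have hρ0' : ρ ≠ 0 := ne_of_gt hρ0
  have hdr : δ / ρ * ρ = δ := div_mul_cancel₀ δ hρ0'
  refine ⟨?_, ?_, ?_, ?_, ?_⟩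
  · intro ν
    rw [← sub_nonneg]
    have key : (-(1 - ρ ^ 2) * (ρ - δ / ρ) - (-ρ * (1 - ρ ^ 2) - ρ * δ + 2 * ν * δ - ν ^ 2 * ρ * δ)) * ρ
        = δ * (ν * ρ - 1) ^ 2 := by
      field_simp
      ring
    nlinarith [sq_nonneg (ν * ρ - 1), mul_nonneg hδ0.le (sq_nonneg (ν * ρ - 1))]
  · have : 0 < ρ - δ / ρ := by
      rw [sub_pos, div_lt_iff₀ hρ0]
      nlinarith
    nlinarith
  · intro ν
    constructor
    · intro he
      have key : δ * (ν * ρ - 1) ^ 2 = 0 := by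
        field_simp at he ⊢
        nlinarith [he]
      have : (ν * ρ - 1) ^ 2 = 0 := by
        rcases mul_eq_zero.mp key with h' | h'
        · exact absurd h' (ne_of_gt hδ0)
        · exact h'
      have hνρ : ν * ρ = 1 := by nlinarith [sq_nonneg (ν * ρ - 1)]
      field_simp
      linarith
    · intro he
      subst he
      field_simp
      ring
  · intro ν hν
    obtain ⟨h1, h2⟩ := hν
    have hνρ : ν * ρ ≤ 1 := by
      rw [← le_div_iff₀ hρ0] at *
      linarith [h2]
    exact gpos_aux ρ δ ν hρ0 hρ1 hδ0 h h1 hνρ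
  · intro a ha b hb hab
    obtain ⟨ha1, ha2⟩ := ha
    obtain ⟨hb1, hb2⟩ := hb
    have haρ : a * ρ ≤ 1 := by rw [← le_div_iff₀ hρ0]; exact ha2
    have hbρ : b * ρ ≤ 1 := by rw [← le_div_iff₀ hρ0]; exact hb2
    have hga := gpos_aux ρ δ a hρ0 hρ1 hδ0 h ha1 haρ
    have hgb := gpos_aux ρ δ b hρ0 hρ1 hδ0 h hb1 hbρ
    simp only
    rw [div_lt_div_iff₀ hgb hga]
    nlinarith [mul_nonneg (mul_nonneg (sub_nonneg.2 haρ) (sub_nonneg.2 hbρ)) (sub_pos.2 hab).le,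
      mul_pos (sub_pos.2 hab) (mul_pos (by nlinarith : (0:ℝ) < 1 - ρ ^ 2) (by nlinarith : (0:ℝ) < ρ ^ 2 - δ))]
end

section
/- Let ρ ∈ (0,1) and δ ∈ (0,1) with δ ≠ ρ², and set ν_max := min(1/ρ, ρ/δ). Then the function η(ν) := (ρ − νδ)·(1 − νρ) / ( ν · (1 − ρ² − δ·(1 − 2νρ + ν²)) ) is well defined (the denominator is nonzero), continuous, and strictly decreasing on [ρ, ν_max], with η(ρ) = 1 and η(ν_max) = 0; in particular η is a bijection from [ρ, ν_max] onto [0,1]. -/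
/-!
Write `N(ν) = (ρ - νδ)(1 - νρ)` and `M(ν) = (ν - ρ)(1 - ν²δ)`. The denominator of `η` is
`N + M`, so `η = N / (N + M)`; this is the `α` with `(1 - α) N = α M`, i.e. the root of `f_α`.
On `[ρ, ν_max]` both `N` and `M` are nonnegative: `ν ≤ 1/ρ` and `ν ≤ ρ/δ` make the factors of
`N` nonnegative, and `ν²δ = (νρ)(νδ)/ρ ≤ 1`, with equality only if `δ = ρ²`. They do not
vanish together, `M(ρ) = 0` gives `η(ρ) = 1`, and `N(ν_max) = 0` gives `η(ν_max) = 0`.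
Monotonicity amounts to `N(y) M(x) < N(x) M(y)` for `x < y`, which follows from an explicit
polynomial identity whose cofactor of `y - x` is visibly positive. Continuity and the
intermediate value theorem then give the bijection.
-/

open Set

theorem StrictAntiOn.bijOn_Icc_of_continuousOn {α β : Type*} [ConditionallyCompleteLinearOrder α]
    [TopologicalSpace α] [OrderTopology α] [DenselyOrdered α] [LinearOrder β]
    [TopologicalSpace β] [OrderClosedTopology β] {f : α → β} {a b : α} (hab : a ≤ b)
    (hf : StrictAntiOn f (Icc a b)) (hc : ContinuousOn f (Icc a b)) :
    BijOn f (Icc a b) (Icc (f b) (f a)) :=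
  ⟨hf.antitoneOn.mapsTo_Icc, hf.injOn, intermediate_value_Icc' hab hc⟩

namespace TimeSharing

noncomputable def eta (ρ δ ν : ℝ) : ℝ :=
  (ρ - ν * δ) * (1 - ν * ρ) / (ν * (1 - ρ ^ 2 - δ * (1 - 2 * ν * ρ + ν ^ 2)))

variable {ρ δ ν : ℝ}

theorem den_eq (ρ δ ν : ℝ) :
    ν * (1 - ρ ^ 2 - δ * (1 - 2 * ν * ρ + ν ^ 2)) =
      (ρ - ν * δ) * (1 - ν * ρ) + (ν - ρ) * (1 - ν ^ 2 * δ) := by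
  ring

theorem eta_eq_div (ρ δ ν : ℝ) :
    eta ρ δ ν = (ρ - ν * δ) * (1 - ν * ρ) /
      ((ρ - ν * δ) * (1 - ν * ρ) + (ν - ρ) * (1 - ν ^ 2 * δ)) := by
  rw [eta, den_eq]

theorem sq_mul_lt_one (hρ : 0 < ρ) (hδ : 0 < δ) (h : δ ≠ ρ ^ 2) (hν : 0 ≤ ν)
    (hνρ : ν * ρ ≤ 1) (hνδ : ν * δ ≤ ρ) : ν ^ 2 * δ < 1 := by
  have hle : (ν * ρ) * (ν * δ) ≤ 1 * ρ := mul_le_mul hνρ hνδ (by positivity) zero_le_one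
  refine lt_of_le_of_ne (by nlinarith) fun heq => h ?_
  have hνρ_eq : ν * ρ = 1 := by nlinarith
  linear_combination (-δ * (1 + ν * ρ)) * hνρ_eq + ρ ^ 2 * heq

theorem bounds_of_mem_Icc (hρ : 0 < ρ) (hδ : 0 < δ) (h : δ ≠ ρ ^ 2)
    (hν : ν ∈ Icc ρ (min (1 / ρ) (ρ / δ))) :
    ρ ≤ ν ∧ ν * ρ ≤ 1 ∧ ν * δ ≤ ρ ∧ ν ^ 2 * δ < 1 := by
  simp only [mem_Icc, le_min_iff, le_div_iff₀ hρ, le_div_iff₀ hδ] at hν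
  obtain ⟨hρν, hνρ, hνδ⟩ := hν
  exact ⟨hρν, hνρ, hνδ, sq_mul_lt_one hρ hδ h (hρ.le.trans hρν) hνρ hνδ⟩

theorem den_pos (hρ : 0 < ρ) (hρ1 : ρ < 1) (hδ1 : δ < 1) (hρν : ρ ≤ ν) (hνρ : ν * ρ ≤ 1)
    (hνδ : ν * δ ≤ ρ) (hνδ2 : ν ^ 2 * δ < 1) :
    0 < (ρ - ν * δ) * (1 - ν * ρ) + (ν - ρ) * (1 - ν ^ 2 * δ) := by
  have hN : 0 ≤ (ρ - ν * δ) * (1 - ν * ρ) := mul_nonneg (by linarith) (by linarith)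
  rcases hρν.eq_or_lt with rfl | hlt
  · have hN' : 0 < (ρ - ρ * δ) * (1 - ρ * ρ) := mul_pos (by nlinarith) (by nlinarith)
    simpa using hN'
  · nlinarith [mul_pos (sub_pos.2 hlt) (sub_pos.2 hνδ2)]

theorem num_mul_gap_lt {x y : ℝ} (hρ : 0 < ρ) (hδ : 0 < δ) (hρx : ρ ≤ x) (hxy : x < y)
    (hyρ : y * ρ ≤ 1) (hyδ : y * δ ≤ ρ) (hyδ2 : y ^ 2 * δ < 1) :
    (ρ - y * δ) * (1 - y * ρ) * ((x - ρ) * (1 - x ^ 2 * δ)) <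
      (ρ - x * δ) * (1 - x * ρ) * ((y - ρ) * (1 - y ^ 2 * δ)) := by
  have hNx : 0 < (ρ - x * δ) * (1 - x * ρ) := mul_pos (by nlinarith) (by nlinarith)
  have hy : 0 ≤ y := by linarith
  have hyx : 0 ≤ y - x := by linarith
  have hu : 0 ≤ ρ - y * δ := by linarith
  have hv : 0 ≤ 1 - y * ρ := by linarith
  have hw : 0 ≤ ρ - x * δ := by nlinarith
  obtain ⟨P, hP⟩ : ∃ P, (ρ - y * δ) * (1 - y * ρ) * (ρ - x * δ) + ρ * y * (ρ - y * δ) ^ 2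
      + δ * (1 - y * ρ) ^ 2 + (y - x) * ρ * δ * (1 - y * ρ)
      + (y - x) * ρ * δ * (ρ - y * δ) * y = P := ⟨_, rfl⟩
  have hP_nonneg : 0 ≤ P := by rw [← hP]; bound
  have hcofactor : 0 < (ρ - x * δ) * (1 - x * ρ) * (1 - y ^ 2 * δ) + (x - ρ) * P :=
    add_pos_of_pos_of_nonneg (mul_pos hNx (by linarith)) (mul_nonneg (by linarith) hP_nonneg)
  have hident : (ρ - x * δ) * (1 - x * ρ) * ((y - ρ) * (1 - y ^ 2 * δ)) -
      (ρ - y * δ) * (1 - y * ρ) * ((x - ρ) * (1 - x ^ 2 * δ)) =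
      (y - x) * ((ρ - x * δ) * (1 - x * ρ) * (1 - y ^ 2 * δ) + (x - ρ) * P) := by
    rw [← hP]; ring
  linarith [mul_pos (sub_pos.2 hxy) hcofactor]

theorem eta_left (hρ : 0 < ρ) (hρ1 : ρ < 1) (hδ1 : δ < 1) : eta ρ δ ρ = 1 := by
  have hN : 0 < (ρ - ρ * δ) * (1 - ρ * ρ) := mul_pos (by nlinarith) (by nlinarith)
  rw [eta_eq_div, sub_self, zero_mul, add_zero, div_self hN.ne']

theorem eta_right (hρ : 0 < ρ) (hδ : 0 < δ) : eta ρ δ (min (1 / ρ) (ρ / δ)) = 0 := by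
  rw [eta, div_eq_zero_iff, mul_eq_zero, mul_eq_zero, sub_eq_zero, sub_eq_zero]
  rcases min_choice (1 / ρ) (ρ / δ) with hmin | hmin <;> rw [hmin] <;> field_simp <;> simp

variable (hρ : ρ ∈ Ioo (0 : ℝ) 1) (hδ : δ ∈ Ioo (0 : ℝ) 1) (h : δ ≠ ρ ^ 2)
include hρ hδ h

theorem den_pos_of_mem_Icc (hν : ν ∈ Icc ρ (min (1 / ρ) (ρ / δ))) :
    0 < (ρ - ν * δ) * (1 - ν * ρ) + (ν - ρ) * (1 - ν ^ 2 * δ) := by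
  obtain ⟨hρν, hνρ, hνδ, hνδ2⟩ := bounds_of_mem_Icc hρ.1 hδ.1 h hν
  exact den_pos hρ.1 hρ.2 hδ.2 hρν hνρ hνδ hνδ2

theorem den_ne_zero (hν : ν ∈ Icc ρ (min (1 / ρ) (ρ / δ))) :
    ν * (1 - ρ ^ 2 - δ * (1 - 2 * ν * ρ + ν ^ 2)) ≠ 0 := by
  rw [den_eq]
  exact (den_pos_of_mem_Icc hρ hδ h hν).ne'

theorem continuousOn_eta : ContinuousOn (eta ρ δ) (Icc ρ (min (1 / ρ) (ρ / δ))) :=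
  ContinuousOn.div (by fun_prop) (by fun_prop) fun _ hν => den_ne_zero hρ hδ h hν

theorem strictAntiOn_eta : StrictAntiOn (eta ρ δ) (Icc ρ (min (1 / ρ) (ρ / δ))) := by
  intro x hx y hy hxy
  obtain ⟨hρx, -, -, -⟩ := bounds_of_mem_Icc hρ.1 hδ.1 h hx
  obtain ⟨-, hyρ, hyδ, hyδ2⟩ := bounds_of_mem_Icc hρ.1 hδ.1 h hy
  rw [eta_eq_div, eta_eq_div,
    div_lt_div_iff₀ (den_pos_of_mem_Icc hρ hδ h hy) (den_pos_of_mem_Icc hρ hδ h hx)]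
  nlinarith [num_mul_gap_lt hρ.1 hδ.1 hρx hxy hyρ hyδ hyδ2]

end TimeSharing

open TimeSharing in
/-- For `ρ ∈ (0,1)`, `δ ∈ (0,1)` with `δ ≠ ρ²`, and
`ν_max := min(1/ρ, ρ/δ)`, the function
`η(ν) = (ρ − νδ)(1 − νρ) / (ν(1 − ρ² − δ(1 − 2νρ + ν²)))` has nonzero denominator on
`[ρ, ν_max]`, is continuous and strictly decreasing there, with `η(ρ) = 1` and
`η(ν_max) = 0`; in particular it is a bijection from `[ρ, ν_max]` onto `[0,1]`. -/
theorem eta_parametrization (ρ δ : ℝ)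
    (hρ : ρ ∈ Set.Ioo (0 : ℝ) 1) (hδ : δ ∈ Set.Ioo (0 : ℝ) 1) (h : δ ≠ ρ ^ 2) :
    (∀ ν ∈ Set.Icc ρ (min (1 / ρ) (ρ / δ)),
      ν * (1 - ρ ^ 2 - δ * (1 - 2 * ν * ρ + ν ^ 2)) ≠ 0) ∧
    ContinuousOn (fun ν : ℝ =>
        (ρ - ν * δ) * (1 - ν * ρ) / (ν * (1 - ρ ^ 2 - δ * (1 - 2 * ν * ρ + ν ^ 2))))
      (Set.Icc ρ (min (1 / ρ) (ρ / δ))) ∧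
    StrictAntiOn (fun ν : ℝ =>
        (ρ - ν * δ) * (1 - ν * ρ) / (ν * (1 - ρ ^ 2 - δ * (1 - 2 * ν * ρ + ν ^ 2))))
      (Set.Icc ρ (min (1 / ρ) (ρ / δ))) ∧
    (ρ - ρ * δ) * (1 - ρ * ρ) / (ρ * (1 - ρ ^ 2 - δ * (1 - 2 * ρ * ρ + ρ ^ 2))) = 1 ∧
    (ρ - min (1 / ρ) (ρ / δ) * δ) * (1 - min (1 / ρ) (ρ / δ) * ρ) /
        (min (1 / ρ) (ρ / δ) *
          (1 - ρ ^ 2 - δ * (1 - 2 * min (1 / ρ) (ρ / δ) * ρ + min (1 / ρ) (ρ / δ) ^ 2)))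
      = 0 ∧
    Set.BijOn (fun ν : ℝ =>
        (ρ - ν * δ) * (1 - ν * ρ) / (ν * (1 - ρ ^ 2 - δ * (1 - 2 * ν * ρ + ν ^ 2))))
      (Set.Icc ρ (min (1 / ρ) (ρ / δ))) (Set.Icc 0 1) := by
  have hρ_le_max : ρ ≤ min (1 / ρ) (ρ / δ) := by
    rw [le_min_iff, le_div_iff₀ hρ.1, le_div_iff₀ hδ.1]
    constructor <;> nlinarith [hρ.1, hρ.2, hδ.1, hδ.2]
  have hbij := (strictAntiOn_eta hρ hδ h).bijOn_Icc_of_continuousOn hρ_le_max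
    (continuousOn_eta hρ hδ h)
  rw [eta_left hρ.1 hρ.2 hδ.2, eta_right hρ.1 hδ.1] at hbij
  exact ⟨fun _ hν => den_ne_zero hρ hδ h hν, continuousOn_eta hρ hδ h,
    strictAntiOn_eta hρ hδ h, eta_left hρ.1 hρ.2 hδ.2, eta_right hρ.1 hδ.1, hbij⟩
end

section
/- Let ρ ∈ (0,1), δ ∈ (0,1) with δ ≠ ρ², and α ∈ [0,1]. Then the cubic f_α(ν) := (1−α)·(ρ − νδ)·(1 − νρ) − α·(ν − ρ)·(1 − ν²δ) has exactly one root ν in the interval [ρ, min(1/ρ, ρ/δ)]. -/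
/-- The cubic under consideration. -/
def fcub (ρ δ α ν : ℝ) : ℝ :=
  (1 - α) * (ρ - ν * δ) * (1 - ν * ρ) - α * (ν - ρ) * (1 - ν ^ 2 * δ)

set_option maxHeartbeats 1600000 in
/-- For `ρ ∈ (0,1)`, `δ ∈ (0,1)` with `δ ≠ ρ²`, and `α ∈ [0,1]`, the
cubic `f_α(ν) = (1−α)(ρ − νδ)(1 − νρ) − α(ν − ρ)(1 − ν²δ)` has exactly one root in
`[ρ, min(1/ρ, ρ/δ)]`. -/
theorem cubic_unique_root (ρ δ α : ℝ)
    (hρ : ρ ∈ Set.Ioo (0 : ℝ) 1) (hδ : δ ∈ Set.Ioo (0 : ℝ) 1) (h : δ ≠ ρ ^ 2)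
    (hα : α ∈ Set.Icc (0 : ℝ) 1) :
    ∃! ν : ℝ, ν ∈ Set.Icc ρ (min (1 / ρ) (ρ / δ)) ∧
      (1 - α) * (ρ - ν * δ) * (1 - ν * ρ) - α * (ν - ρ) * (1 - ν ^ 2 * δ) = 0 := by
  obtain ⟨hρ0, hρ1⟩ := hρ
  obtain ⟨hδ0, hδ1⟩ := hδ
  obtain ⟨hα0, hα1⟩ := hα
  have hρne : ρ ≠ 0 := ne_of_gt hρ0
  have hδne : δ ≠ 0 := ne_of_gt hδ0
  set M := min (1 / ρ) (ρ / δ) with hMdef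
  have hM1 : M ≤ 1 / ρ := min_le_left _ _
  have hM2 : M ≤ ρ / δ := min_le_right _ _
  have hρM : ρ < M := by
    apply lt_min
    · rw [lt_div_iff₀ hρ0]; nlinarith
    · rw [lt_div_iff₀ hδ0]; nlinarith
  have hM0 : 0 < M := lt_trans hρ0 hρM
  -- value at the left endpoint
  have hFρ : 0 ≤ fcub ρ δ α ρ := by
    simp only [fcub]
    nlinarith [mul_nonneg (mul_nonneg (sub_nonneg.2 hα1)
      (by nlinarith : (0:ℝ) ≤ ρ - ρ * δ)) (by nlinarith : (0:ℝ) ≤ 1 - ρ * ρ)]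
  -- value at the right endpoint
  have hFM : fcub ρ δ α M ≤ 0 ∧ (0 < α → fcub ρ δ α M < 0) := by
    set F := fcub ρ δ α M with hFdef
    rcases le_total (1 / ρ) (ρ / δ) with hc | hc
    · have hMeq : M = 1 / ρ := min_eq_left hc
      have hd : δ < ρ ^ 2 := by
        have hle : δ ≤ ρ ^ 2 := by
          rw [div_le_div_iff₀ hρ0 hδ0] at hc; nlinarith
        exact lt_of_le_of_ne hle h
      have hkey : ρ ^ 3 * F = -(α * (1 - ρ ^ 2) * (ρ ^ 2 - δ)) := by
        rw [hFdef, hMeq]; simp only [fcub]; field_simp; ring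
      constructor
      · nlinarith [pow_pos hρ0 3,
          mul_nonneg (mul_nonneg hα0 (by nlinarith : (0:ℝ) ≤ 1 - ρ ^ 2))
            (by nlinarith : (0:ℝ) ≤ ρ ^ 2 - δ)]
      · intro hαpos
        nlinarith [pow_pos hρ0 3,
          mul_pos (mul_pos hαpos (by nlinarith : (0:ℝ) < 1 - ρ ^ 2))
            (by nlinarith : (0:ℝ) < ρ ^ 2 - δ)]
    · have hMeq : M = ρ / δ := min_eq_right hc
      have hd : ρ ^ 2 < δ := by
        have hle : ρ ^ 2 ≤ δ := by
          rw [div_le_div_iff₀ hδ0 hρ0] at hc; nlinarith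
        exact lt_of_le_of_ne hle (Ne.symm h)
      have hkey : δ ^ 2 * F = -(α * (ρ * (1 - δ)) * (δ - ρ ^ 2)) := by
        rw [hFdef, hMeq]; simp only [fcub]; field_simp; ring
      constructor
      · nlinarith [pow_pos hδ0 2,
          mul_nonneg (mul_nonneg hα0 (by nlinarith : (0:ℝ) ≤ ρ * (1 - δ)))
            (by nlinarith : (0:ℝ) ≤ δ - ρ ^ 2)]
      · intro hαpos
        nlinarith [pow_pos hδ0 2,
          mul_pos (mul_pos hαpos (by nlinarith : (0:ℝ) < ρ * (1 - δ)))
            (by nlinarith : (0:ℝ) < δ - ρ ^ 2)]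
  -- existence via the intermediate value theorem
  have hcont : ContinuousOn (fun ν => fcub ρ δ α ν) (Set.Icc ρ M) := by
    have hc : Continuous (fun ν : ℝ => fcub ρ δ α ν) := by unfold fcub; fun_prop
    exact hc.continuousOn
  obtain ⟨ν₀, hν₀mem, hν₀⟩ :=
    intermediate_value_Icc' hρM.le hcont (Set.mem_Icc.2 ⟨hFM.1, hFρ⟩)
  -- uniqueness
  have key : ∀ x ∈ Set.Icc ρ M, fcub ρ δ α x = 0 →
      ∀ y ∈ Set.Icc ρ M, fcub ρ δ α y = 0 → x = y := by
    rcases eq_or_lt_of_le hα0 with hα | hαpos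
    · -- α = 0 : the root must be M
      intro x hx hfx y hy hfy
      have hroot : ∀ z ∈ Set.Icc ρ M, fcub ρ δ α z = 0 → z = M := by
        intro z hz hfz
        have hz2 : (ρ - z * δ) * (1 - z * ρ) = 0 := by
          simp only [fcub] at hfz
          rw [← hα] at hfz
          linear_combination hfz
        rcases mul_eq_zero.1 hz2 with h1 | h1
        · have hzeq : z = ρ / δ := by field_simp; linarith
          exact le_antisymm hz.2 (hzeq ▸ hM2)
        · have hzeq : z = 1 / ρ := by field_simp; linarith
          exact le_antisymm hz.2 (hzeq ▸ hM1)
      rw [hroot x hx hfx, hroot y hy hfy]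
    · -- α > 0
      have H : ∀ u v : ℝ, u ∈ Set.Icc ρ M → v ∈ Set.Icc ρ M →
          fcub ρ δ α u = 0 → fcub ρ δ α v = 0 → u < v → False := by
        intro u v hu hv hfu hfv huv
        set s : ℝ := -(α * (u + v) + (1 - 2 * α) * ρ) with hs
        have hfac : ∀ z : ℝ, fcub ρ δ α z = δ * (z - u) * (z - v) * (α * z - s) := by
          intro z
          have hkey : fcub ρ δ α z * (v - u) =
              δ * (z - u) * (z - v) * (α * z - s) * (v - u) := by
            simp only [fcub, hs] at *
            linear_combination (v - z) * hfu + (z - u) * hfv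
          exact mul_right_cancel₀ (sub_ne_zero.2 huv.ne') hkey
        have hu0 : 0 < u := lt_of_lt_of_le hρ0 hu.1
        have hv0 : 0 < v := lt_of_lt_of_le hρ0 hv.1
        have h0 : ρ = δ * (0 - u) * (0 - v) * (α * 0 - s) := by
          have := hfac 0
          simp only [fcub] at this
          linarith [this]
        have hsneg : s < 0 := by nlinarith [mul_pos (mul_pos hδ0 hu0) hv0]
        have hMneg : fcub ρ δ α M < 0 := hFM.2 hαpos
        have hMfac := hfac M
        nlinarith [mul_nonneg (mul_nonneg (mul_nonneg hδ0.le
          (sub_nonneg.2 hu.2)) (sub_nonneg.2 hv.2))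
          (by nlinarith [mul_nonneg hαpos.le hM0.le] : (0:ℝ) ≤ α * M - s)]
      intro x hx hfx y hy hfy
      rcases lt_trichotomy x y with h' | h' | h'
      · exact absurd (H x y hx hy hfx hfy h') id
      · exact h'
      · exact absurd (H y x hy hx hfy hfx h') id
  exact ⟨ν₀, ⟨hν₀mem, hν₀⟩, fun y hy => key y hy.1 hy.2 ν₀ hν₀mem hν₀⟩
end

section
/- Let ρ ∈ (0,1), κ > 0, and δ ∈ [ρ², 1]. Then ((1 − ρ²δ)^{1/κ} − (1−ρ)^{2/κ}) / ((1 − ρ²)^{1/κ} − (1−ρ)^{2/κ}) ≤ 1 + (1+ρ)^{1/κ}·((1+ρ²)^{1/κ} − 1) / ((1+ρ)^{1/κ} − (1−ρ)^{1/κ}), where the denominator (1 − ρ²)^{1/κ} − (1−ρ)^{2/κ} is strictly positive; equality holds at δ = ρ². -/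
/-- For `ρ ∈ (0,1)`, `κ > 0`, `δ ∈ [ρ², 1]`:
`((1 − ρ²δ)^{1/κ} − (1−ρ)^{2/κ}) / ((1 − ρ²)^{1/κ} − (1−ρ)^{2/κ})
  ≤ 1 + (1+ρ)^{1/κ}((1+ρ²)^{1/κ} − 1)/((1+ρ)^{1/κ} − (1−ρ)^{1/κ})`,
where the denominator `(1 − ρ²)^{1/κ} − (1−ρ)^{2/κ}` is strictly positive, and
equality holds at `δ = ρ²`. -/
theorem key_scalar_inequality (ρ κ δ : ℝ)
    (hρ : ρ ∈ Set.Ioo (0 : ℝ) 1) (hκ : 0 < κ) (hδ : δ ∈ Set.Icc (ρ ^ 2) 1) :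
    0 < (1 - ρ ^ 2) ^ (1 / κ) - (1 - ρ) ^ (2 / κ) ∧
    ((1 - ρ ^ 2 * δ) ^ (1 / κ) - (1 - ρ) ^ (2 / κ)) /
        ((1 - ρ ^ 2) ^ (1 / κ) - (1 - ρ) ^ (2 / κ))
      ≤ 1 + (1 + ρ) ^ (1 / κ) * ((1 + ρ ^ 2) ^ (1 / κ) - 1) /
          ((1 + ρ) ^ (1 / κ) - (1 - ρ) ^ (1 / κ)) ∧
    (δ = ρ ^ 2 →
      ((1 - ρ ^ 2 * δ) ^ (1 / κ) - (1 - ρ) ^ (2 / κ)) /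
          ((1 - ρ ^ 2) ^ (1 / κ) - (1 - ρ) ^ (2 / κ))
        = 1 + (1 + ρ) ^ (1 / κ) * ((1 + ρ ^ 2) ^ (1 / κ) - 1) /
            ((1 + ρ) ^ (1 / κ) - (1 - ρ) ^ (1 / κ))) := by
  obtain ⟨hρ0, hρ1⟩ := hρ
  obtain ⟨hδ1, hδ2⟩ := hδ
  have ha0 : 0 < 1 / κ := by positivity
  have h1 : (0:ℝ) < 1 - ρ := by linarith
  have h2 : (0:ℝ) < 1 + ρ := by linarith
  have h3 : (0:ℝ) < 1 - ρ ^ 2 := by nlinarith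
  have h4 : (0:ℝ) < 1 + ρ ^ 2 := by positivity
  set a := 1 / κ with ha
  set t := (1 - ρ) ^ a with htdef
  set u := (1 + ρ) ^ a with hudef
  set v := (1 + ρ ^ 2) ^ a with hvdef
  have ht : 0 < t := Real.rpow_pos_of_pos h1 a
  have hu : 0 < u := Real.rpow_pos_of_pos h2 a
  have htu : t < u := Real.rpow_lt_rpow h1.le (by linarith) ha0
  have hv : 1 ≤ v := by
    calc (1:ℝ) = 1 ^ a := (Real.one_rpow a).symm
    _ ≤ v := Real.rpow_le_rpow (by norm_num) (by nlinarith) ha0.le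
  -- rewrite products
  have e1 : (1 - ρ ^ 2) ^ a = t * u := by
    rw [show (1 - ρ ^ 2) = (1 - ρ) * (1 + ρ) by ring, Real.mul_rpow h1.le h2.le]
  have e2 : (1 - ρ) ^ (2 / κ) = t * t := by
    rw [show (2 : ℝ) / κ = a + a by rw [ha]; ring, Real.rpow_add h1]
  have hden : 0 < t * u - t * t := by nlinarith
  have hut : 0 < u - t := by linarith
  have hrhs : 1 + u * (v - 1) / (u - t) = (u * v - t) / (u - t) := by
    field_simp
    ring
  have key : ∀ x : ℝ, 1 - ρ ^ 2 ≤ x → x ≤ 1 - ρ ^ 4 →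
      (x ^ a - t * t) / (t * u - t * t) ≤ (u * v - t) / (u - t) := by
    intro x hx1 hx2
    have hx0 : 0 ≤ x := by linarith
    have hxle : x ^ a ≤ t * u * v := by
      calc x ^ a ≤ (1 - ρ ^ 4) ^ a := Real.rpow_le_rpow hx0 hx2 ha0.le
      _ = (1 - ρ ^ 2) ^ a * (1 + ρ ^ 2) ^ a := by
          rw [show (1 - ρ ^ 4) = (1 - ρ ^ 2) * (1 + ρ ^ 2) by ring,
            Real.mul_rpow h3.le h4.le]
      _ = t * u * v := by rw [e1]
    calc (x ^ a - t * t) / (t * u - t * t)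
        ≤ (t * u * v - t * t) / (t * u - t * t) := by gcongr
      _ = (u * v - t) / (u - t) := by
          rw [div_eq_div_iff hden.ne' hut.ne']; ring
  have hb1 : 1 - ρ ^ 2 ≤ 1 - ρ ^ 2 * δ := by nlinarith
  have hb2 : 1 - ρ ^ 2 * δ ≤ 1 - ρ ^ 4 := by nlinarith
  refine ⟨by rw [e1, e2]; exact hden, ?_, ?_⟩
  · rw [e1, e2, hrhs]
    exact key _ hb1 hb2
  · intro hdel
    rw [e1, e2, hrhs, hdel]
    have hxeq : (1 : ℝ) - ρ ^ 2 * ρ ^ 2 = 1 - ρ ^ 4 := by ring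
    rw [hxeq, show (1 - ρ ^ 4) = (1 - ρ ^ 2) * (1 + ρ ^ 2) by ring,
      Real.mul_rpow h3.le h4.le, e1]
    rw [div_eq_div_iff hden.ne' hut.ne']; ring
end

section
/- Let ρ ∈ (0,1), κ > 0, N1 ≥ N2 > 0, and D1, D2 ∈ (0,1) with D2 ≤ 1 − ρ²·(1−D1); set δ := 1−D1. Then for every ν ∈ [ρ, min(1/ρ, ρ/δ, √((1−D2)/δ))], with A(ν) := ((1−ρ²)/(D1·(1−ν²δ) − (ρ−νδ)²))^{1/κ} and P(ν) := N1·(A(ν) − 1) + N2·(((1−ν²δ)/D2)^{1/κ} − 1)·A(ν), one has P(ν) ≥ P_outer := N1·(D1^{−1/κ} − 1) + N2·D1^{−1/κ}·max{0, ((1−ρ²)/D2)^{1/κ} − 1}. -/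
set_option maxHeartbeats 800000 in
/-- For `ρ ∈ (0,1)`, `κ > 0`, `N1 ≥ N2 > 0`, `D1, D2 ∈ (0,1)` with
`D2 ≤ 1 − ρ²(1−D1)` and `δ := 1−D1`, for every
`ν ∈ [ρ, min(1/ρ, ρ/δ, √((1−D2)/δ))]`, with
`A(ν) := ((1−ρ²)/(D1(1−ν²δ) − (ρ−νδ)²))^{1/κ}` and
`P(ν) := N1(A(ν) − 1) + N2(((1−ν²δ)/D2)^{1/κ} − 1)·A(ν)`, one has
`P(ν) ≥ N1(D1^{−1/κ} − 1) + N2·D1^{−1/κ}·max{0, ((1−ρ²)/D2)^{1/κ} − 1}`. -/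
theorem separate_power_at_least_outer_bound (ρ κ N1 N2 D1 D2 : ℝ)
    (hρ : ρ ∈ Set.Ioo (0 : ℝ) 1) (hκ : 0 < κ) (hN2 : 0 < N2) (hN : N2 ≤ N1)
    (hD1 : D1 ∈ Set.Ioo (0 : ℝ) 1) (hD2 : D2 ∈ Set.Ioo (0 : ℝ) 1)
    (hnd : D2 ≤ 1 - ρ ^ 2 * (1 - D1)) :
    ∀ ν ∈ Set.Icc ρ (min (1 / ρ)
        (min (ρ / (1 - D1)) (Real.sqrt ((1 - D2) / (1 - D1))))),
      N1 * (((1 - ρ ^ 2) /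
            (D1 * (1 - ν ^ 2 * (1 - D1)) - (ρ - ν * (1 - D1)) ^ 2)) ^ (1 / κ) - 1)
        + N2 * (((1 - ν ^ 2 * (1 - D1)) / D2) ^ (1 / κ) - 1)
          * ((1 - ρ ^ 2) /
              (D1 * (1 - ν ^ 2 * (1 - D1)) - (ρ - ν * (1 - D1)) ^ 2)) ^ (1 / κ)
      ≥ N1 * (D1 ^ (-1 / κ) - 1)
        + N2 * D1 ^ (-1 / κ) * max 0 (((1 - ρ ^ 2) / D2) ^ (1 / κ) - 1) := by
  obtain ⟨hρ0, hρ1⟩ := hρ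
  obtain ⟨hD10, hD11⟩ := hD1
  obtain ⟨hD20, hD21⟩ := hD2
  intro ν hν
  obtain ⟨hνρ, hνmin⟩ := hν
  have hδ0 : (0:ℝ) < 1 - D1 := by linarith
  have hν0 : 0 < ν := lt_of_lt_of_le hρ0 hνρ
  have h1ρ : (0:ℝ) < 1 - ρ ^ 2 := by nlinarith
  have h1 : ν ≤ 1 / ρ := le_trans hνmin (min_le_left _ _)
  have h2 : ν ≤ ρ / (1 - D1) := le_trans hνmin (le_trans (min_le_right _ _) (min_le_left _ _))
  have h3 : ν ≤ Real.sqrt ((1 - D2) / (1 - D1)) :=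
    le_trans hνmin (le_trans (min_le_right _ _) (min_le_right _ _))
  have h1' : ν * ρ ≤ 1 := (le_div_iff₀ hρ0).mp h1
  have h2' : ν * (1 - D1) ≤ ρ := (le_div_iff₀ hδ0).mp h2
  have hsq' : ν ^ 2 ≤ (1 - D2) / (1 - D1) := by
    have hnn : 0 ≤ (1 - D2) / (1 - D1) := div_nonneg (by linarith) (by linarith)
    calc ν ^ 2 ≤ (Real.sqrt ((1 - D2) / (1 - D1))) ^ 2 := by
          exact pow_le_pow_left₀ hν0.le h3 2
      _ = (1 - D2) / (1 - D1) := Real.sq_sqrt hnn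
  have hsq : ν ^ 2 * (1 - D1) ≤ 1 - D2 := (le_div_iff₀ hδ0).mp hsq'
  have h1mν : 0 < 1 - ν ^ 2 * (1 - D1) := by linarith
  have hid : D1 * (1 - ν ^ 2 * (1 - D1)) - (ρ - ν * (1 - D1)) ^ 2
      = D1 * (1 - ν * ρ) + (ν - ρ) * (ρ - ν * (1 - D1)) := by ring
  have hE : 0 < D1 * (1 - ν ^ 2 * (1 - D1)) - (ρ - ν * (1 - D1)) ^ 2 := by
    rcases eq_or_lt_of_le h1' with heq | hlt
    · -- ν * ρ = 1
      have h4 : 0 < ν * (ρ - ν * (1 - D1)) := by nlinarith [hsq, hD20, heq]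
      have hu : 0 < ρ - ν * (1 - D1) := by
        by_contra h
        push_neg at h
        nlinarith [mul_nonpos_of_nonneg_of_nonpos hν0.le h]
      have ht : 0 < ν - ρ := by nlinarith
      have h0 : D1 * (1 - ν * ρ) = 0 := by rw [heq]; ring
      rw [hid]
      linarith [h0, mul_pos ht hu]
    · rw [hid]
      have h5 := mul_nonneg (by linarith : (0:ℝ) ≤ ν - ρ) (by linarith : (0:ℝ) ≤ ρ - ν * (1 - D1))
      have h6 := mul_pos hD10 (by linarith : (0:ℝ) < 1 - ν * ρ)
      linarith [h5, h6]
  have hEleD1 : D1 * (1 - ν ^ 2 * (1 - D1)) - (ρ - ν * (1 - D1)) ^ 2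
      ≤ D1 * (1 - ν ^ 2 * (1 - D1)) := by linarith [sq_nonneg (ρ - ν * (1 - D1))]
  have hEle2 : D1 * (1 - ν ^ 2 * (1 - D1)) - (ρ - ν * (1 - D1)) ^ 2 ≤ D1 * (1 - ρ ^ 2) := by
    have hid2 : D1 * (1 - ρ ^ 2) - (D1 * (1 - ν ^ 2 * (1 - D1)) - (ρ - ν * (1 - D1)) ^ 2)
        = (1 - D1) * (ν - ρ) ^ 2 := by ring
    linarith [mul_nonneg hδ0.le (sq_nonneg (ν - ρ))]
  set E := D1 * (1 - ν ^ 2 * (1 - D1)) - (ρ - ν * (1 - D1)) ^ 2 with hEdef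
  clear_value E
  have hp : (0:ℝ) < 1 / κ := by positivity
  have hD_eq : D1 ^ (-1 / κ) = (D1⁻¹) ^ (1 / κ) := by
    rw [Real.inv_rpow hD10.le, ← Real.rpow_neg hD10.le, neg_div]
  have hDinv1 : 1 ≤ D1⁻¹ := by
    nlinarith [mul_inv_cancel₀ hD10.ne', inv_nonneg.mpr hD10.le]
  have hD_ge1 : 1 ≤ D1 ^ (-1 / κ) := by
    rw [hD_eq]
    calc (1:ℝ) = 1 ^ (1 / κ) := (Real.one_rpow _).symm
      _ ≤ (D1⁻¹) ^ (1 / κ) := Real.rpow_le_rpow zero_le_one hDinv1 hp.le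
  have hA_geD : D1 ^ (-1 / κ) ≤ ((1 - ρ ^ 2) / E) ^ (1 / κ) := by
    rw [hD_eq]
    apply Real.rpow_le_rpow (inv_nonneg.mpr hD10.le) ?_ hp.le
    rw [inv_eq_one_div, div_le_div_iff₀ hD10 hE]
    nlinarith [hEle2]
  have hA_ge1 : 1 ≤ ((1 - ρ ^ 2) / E) ^ (1 / κ) := le_trans hD_ge1 hA_geD
  have hB_ge1 : 1 ≤ ((1 - ν ^ 2 * (1 - D1)) / D2) ^ (1 / κ) := by
    calc (1:ℝ) = 1 ^ (1 / κ) := (Real.one_rpow _).symm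
      _ ≤ _ := Real.rpow_le_rpow zero_le_one ((one_le_div hD20).mpr (by linarith)) hp.le
  have hBA : ((1 - ρ ^ 2) / D2) ^ (1 / κ) * D1 ^ (-1 / κ)
      ≤ ((1 - ν ^ 2 * (1 - D1)) / D2) ^ (1 / κ) * ((1 - ρ ^ 2) / E) ^ (1 / κ) := by
    rw [hD_eq, ← Real.mul_rpow (by positivity) (inv_nonneg.mpr hD10.le),
      ← Real.mul_rpow (by positivity) (by positivity)]
    apply Real.rpow_le_rpow (by positivity) ?_ hp.le
    have e1 : (1 - ρ ^ 2) / D2 * D1⁻¹ = (1 - ρ ^ 2) / (D2 * D1) := by ring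
    have e2 : (1 - ν ^ 2 * (1 - D1)) / D2 * ((1 - ρ ^ 2) / E)
        = ((1 - ν ^ 2 * (1 - D1)) * (1 - ρ ^ 2)) / (D2 * E) := div_mul_div_comm _ _ _ _
    rw [e1, e2, div_le_div_iff₀ (by positivity) (by positivity)]
    nlinarith [mul_nonneg (mul_pos h1ρ hD20).le (sub_nonneg.mpr hEleD1)]
  rcases le_or_gt (((1 - ρ ^ 2) / D2) ^ (1 / κ)) 1 with hC | hC
  · rw [max_eq_left (by linarith : ((1 - ρ ^ 2) / D2) ^ (1 / κ) - 1 ≤ 0)]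
    nlinarith [mul_nonneg (by linarith : (0:ℝ) ≤ N1) (sub_nonneg.mpr hA_geD),
      mul_nonneg (mul_nonneg hN2.le (sub_nonneg.mpr hB_ge1))
        (by linarith : (0:ℝ) ≤ ((1 - ρ ^ 2) / E) ^ (1 / κ))]
  · rw [max_eq_right (by linarith : (0:ℝ) ≤ ((1 - ρ ^ 2) / D2) ^ (1 / κ) - 1)]
    nlinarith [mul_nonneg (sub_nonneg.mpr hN) (sub_nonneg.mpr hA_geD),
      mul_nonneg hN2.le (sub_nonneg.mpr hBA)]
end
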